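/- arXiv:math/0703811 — 4 statements merged into one kernel-verified Lean document; each statement's English description precedes it below -/
import Mathlib

section
/- Let φ: ℝ → ℝ be a bounded convex loss function and let F be a family of M ≥ 2 measurable functions from 𝒳 to [−1,1]. Then there exists a constant C > 0 depending only on φ such that for every probability distribution π of (X,Y) and every integer n ≥ 1, the aggregate with exponential weights satisfies E[A^φ(f̃_n^{AEW}) − A^φ_*] ≤ min_{f∈F}(A^φ(f) − A^φ_*) + C √((log M)/n). -/
open MeasureTheory
open scoped ENNReal NNReal

/-- `Y ∈ {−1,1}` encoded by a boolean: `true ↦ 1`, `false ↦ −1`. -/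
noncomputable def ytoR (b : Bool) : ℝ := if b then 1 else -1

/-- The φ-risk `A^φ(f) = E[φ(Y f(X))]` under the distribution `π` of `(X,Y)`. -/
noncomputable def phiRisk {𝒳 : Type*} [MeasurableSpace 𝒳]
    (π : Measure (𝒳 × Bool)) (φ : ℝ → ℝ) (f : 𝒳 → ℝ) : ℝ :=
  ∫ p, φ (ytoR p.2 * f p.1) ∂π

/-- The minimal φ-risk `A^φ_*`, the infimum of `A^φ` over all measurable real-valued functions. -/
noncomputable def phiRiskStar {𝒳 : Type*} [MeasurableSpace 𝒳]
    (π : Measure (𝒳 × Bool)) (φ : ℝ → ℝ) : ℝ :=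
  sInf {r | ∃ f : 𝒳 → ℝ, Measurable f ∧ r = phiRisk π φ f}

/-- The empirical φ-risk `A_n^φ(f) = (1/n) Σ_{i=1}^n φ(Y_i f(X_i))` on the sample `D`. -/
noncomputable def empRisk {𝒳 : Type*} (φ : ℝ → ℝ) {n : ℕ}
    (D : Fin n → 𝒳 × Bool) (f : 𝒳 → ℝ) : ℝ :=
  (1 / (n : ℝ)) * ∑ i, φ (ytoR (D i).2 * f (D i).1)

/-- The aggregate with exponential weights:
`f̃ₙ^{AEW} = Σ_{f∈F} w⁽ⁿ⁾(f) f` with `w⁽ⁿ⁾(f) = exp(−n Aₙ^φ(f)) / Σ_{g∈F} exp(−n Aₙ^φ(g))`. -/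
noncomputable def aew {𝒳 : Type*} (φ : ℝ → ℝ) {M n : ℕ} (F : Fin M → 𝒳 → ℝ)
    (D : Fin n → 𝒳 × Bool) (x : 𝒳) : ℝ :=
  ∑ j, (Real.exp (-(n : ℝ) * empRisk φ D (F j)) /
          ∑ k, Real.exp (-(n : ℝ) * empRisk φ D (F k))) * F j x

lemma integrable_of_bdd {Ω : Type*} [MeasurableSpace Ω] {μ : Measure Ω} [IsFiniteMeasure μ]
    {f : Ω → ℝ} (hm : Measurable f) {c : ℝ} (h : ∀ x, |f x| ≤ c) : Integrable f μ :=
  ⟨hm.aestronglyMeasurable,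
    MeasureTheory.HasFiniteIntegral.of_bounded (C := c) (Filter.Eventually.of_forall fun x => by
      simpa [Real.norm_eq_abs] using h x)⟩

lemma gibbs_bound {M n : ℕ} (hM : 2 ≤ M) (hn : 1 ≤ n) (c : Fin M → ℝ) (j0 : Fin M) :
    ∑ j, (Real.exp (-(n : ℝ) * c j) / ∑ k, Real.exp (-(n : ℝ) * c k)) * c j
      ≤ c j0 + Real.log M / n := by
  haveI : Nonempty (Fin M) := ⟨⟨0, by omega⟩⟩
  have hn0 : (0 : ℝ) < n := by exact_mod_cast hn
  have hM0 : (0 : ℝ) < M := by positivity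
  set L := Real.log M with hL
  have hL2 : Real.log 2 ≤ L := Real.log_le_log (by norm_num) (by exact_mod_cast hM)
  have hLhalf : (1 : ℝ) / 2 ≤ L := by
    have := Real.log_two_gt_d9; linarith
  have he1 : (2 : ℝ) ≤ Real.exp 1 := by
    have := Real.add_one_le_exp (1 : ℝ); linarith
  set e : Fin M → ℝ := fun j => Real.exp (-(n : ℝ) * c j) with he
  have hepos : ∀ j, 0 < e j := fun j => Real.exp_pos _
  have hSpos : 0 < ∑ k, e k := Finset.sum_pos (fun k _ => hepos k) Finset.univ_nonempty
  have key : ∀ j : Fin M, e j * (c j - c j0 - L / n) ≤ e j0 / (Real.exp 1 * M * n) := by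
    intro j
    have h1 : (n : ℝ) * c j - n * c j0 - L ≤ Real.exp ((n * c j - n * c j0) - L - 1) := by
      have := Real.add_one_le_exp (((n : ℝ) * c j - n * c j0) - L - 1); linarith
    have h2 : e j * ((n : ℝ) * c j - n * c j0 - L)
        ≤ e j * Real.exp (((n : ℝ) * c j - n * c j0) - L - 1) :=
      mul_le_mul_of_nonneg_left h1 (hepos j).le
    rw [he, ← Real.exp_add] at h2
    have h3 : Real.exp (-(n : ℝ) * c j + ((n : ℝ) * c j - n * c j0 - L - 1))
        = e j0 * (Real.exp (-L) * Real.exp (-1)) := by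
      rw [he, ← Real.exp_add, ← Real.exp_add]; ring_nf
    have hexpL : Real.exp (-L) = 1 / M := by
      rw [Real.exp_neg, hL, Real.exp_log hM0, one_div]
    have hexp1 : Real.exp (-1 : ℝ) = 1 / Real.exp 1 := by
      rw [Real.exp_neg, one_div]
    have heq : e j0 * (1 / (M : ℝ) * (1 / Real.exp 1)) = e j0 / (Real.exp 1 * M) := by
      rw [div_mul_div_comm, one_mul, mul_one_div, mul_comm (M : ℝ)]
    have h4 : e j * ((n : ℝ) * c j - n * c j0 - L) ≤ e j0 / (Real.exp 1 * M) := by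
      rw [h3, hexpL, hexp1] at h2
      rw [← heq]; exact h2
    have hsub : c j - c j0 - L / n = ((n : ℝ) * c j - n * c j0 - L) / n := by
      field_simp
    have hswap : e j * (c j - c j0 - L / n) = (e j * ((n : ℝ) * c j - n * c j0 - L)) / n := by
      rw [hsub, mul_div_assoc]
    rw [hswap]
    rw [div_le_div_iff₀ hn0 (by positivity)]
    calc e j * ((n : ℝ) * c j - n * c j0 - L) * (Real.exp 1 * M * n)
        = (e j * ((n : ℝ) * c j - n * c j0 - L)) * (Real.exp 1 * M) * n := by ring
      _ ≤ e j0 / (Real.exp 1 * M) * (Real.exp 1 * M) * n := by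
          apply mul_le_mul_of_nonneg_right _ hn0.le
          exact mul_le_mul_of_nonneg_right h4 (by positivity)
      _ = e j0 * n := by field_simp
  -- sum the key bound
  have hsum : ∑ j, e j * (c j - c j0 - L / n) ≤ 0 := by
    have hsplit : ∑ j, e j * (c j - c j0 - L / n)
        = e j0 * (c j0 - c j0 - L / n) + ∑ j ∈ Finset.univ.erase j0, e j * (c j - c j0 - L / n) :=
      (Finset.add_sum_erase _ _ (Finset.mem_univ j0)).symm
    have herase : ∑ j ∈ Finset.univ.erase j0, e j * (c j - c j0 - L / n)
        ≤ (M - 1 : ℝ) * (e j0 / (Real.exp 1 * M * n)) := by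
      have := Finset.sum_le_card_nsmul (Finset.univ.erase j0)
        (fun j => e j * (c j - c j0 - L / n)) (e j0 / (Real.exp 1 * M * n))
        (fun j _ => key j)
      rw [Finset.card_erase_of_mem (Finset.mem_univ j0), Finset.card_univ, Fintype.card_fin] at this
      rw [nsmul_eq_mul] at this
      have hcast : ((M - 1 : ℕ) : ℝ) = (M : ℝ) - 1 := by
        have : (1 : ℕ) ≤ M := by omega
        push_cast [Nat.cast_sub this]; ring
      rw [hcast] at this; exact this
    have hfrac : ((M : ℝ) - 1) / (Real.exp 1 * M) ≤ L := by
      rw [div_le_iff₀ (by positivity)]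
      have h1L : (1 : ℝ) ≤ L * Real.exp 1 := by nlinarith
      nlinarith [hM0]
    have heq2 : ((M : ℝ) - 1) * (e j0 / (Real.exp 1 * ↑M * ↑n))
        = (((M : ℝ) - 1) / (Real.exp 1 * ↑M)) * (e j0 / ↑n) := by
      field_simp
    have hmain2 : (((M : ℝ) - 1) / (Real.exp 1 * ↑M)) * (e j0 / ↑n) ≤ L * (e j0 / n) :=
      mul_le_mul_of_nonneg_right hfrac (by positivity)
    have h5 : e j0 * (c j0 - c j0 - L / n) = -(L * (e j0 / n)) := by ring
    rw [heq2] at herase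
    rw [hsplit, h5]
    linarith
  -- conclude
  have hdiv : ∑ j, e j / (∑ k, e k) * c j = (∑ j, e j * c j) / (∑ k, e k) := by
    rw [Finset.sum_div]; congr 1; ext j; ring
  rw [hdiv, div_le_iff₀ hSpos]
  have hexpand : (c j0 + L / n) * ∑ k, e k = ∑ k, e k * (c j0 + L / n) := by
    rw [Finset.mul_sum]; congr 1; ext k; ring
  rw [hexpand]
  have : ∑ j, e j * c j - ∑ k, e k * (c j0 + L / n) = ∑ j, e j * (c j - c j0 - L / n) := by
    rw [← Finset.sum_sub_distrib]; congr 1; ext j; ring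
  linarith [hsum, this]

lemma mgf_le_of_bdd {Ω : Type*} [MeasurableSpace Ω] (μ : Measure Ω) [IsProbabilityMeasure μ]
    {Z : Ω → ℝ} (hZm : Measurable Z) {c : ℝ} (hc : 0 < c) (hb : ∀ ω, |Z ω| ≤ c)
    (hmean : ∫ ω, Z ω ∂μ = 0) (s : ℝ) :
    ∫ ω, Real.exp (s * Z ω) ∂μ ≤ Real.exp ((s * c) ^ 2 / 2) := by
  set u := s * c with hu
  set A := (Real.exp u + Real.exp (-u)) / 2 with hA
  set Bq := (Real.exp u - Real.exp (-u)) / 2 with hB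
  have hpt : ∀ ω, Real.exp (s * Z ω) ≤ A + (Z ω / c) * Bq := by
    intro ω
    have hx1 : -c ≤ Z ω := (abs_le.mp (hb ω)).1
    have hx2 : Z ω ≤ c := (abs_le.mp (hb ω)).2
    have hw1 : 0 ≤ (1 - Z ω / c) / 2 := by
      have : Z ω / c ≤ 1 := (div_le_one hc).mpr hx2
      linarith
    have hw2 : 0 ≤ (1 + Z ω / c) / 2 := by
      have : -1 ≤ Z ω / c := by
        rw [le_div_iff₀ hc]; linarith
      linarith
    have hconv := convexOn_exp.2 (Set.mem_univ (-u)) (Set.mem_univ u) hw1 hw2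
      (by ring : (1 - Z ω / c) / 2 + (1 + Z ω / c) / 2 = 1)
    simp only [smul_eq_mul] at hconv
    have harg : (1 - Z ω / c) / 2 * (-u) + (1 + Z ω / c) / 2 * u = s * Z ω := by
      field_simp
      ring
    rw [harg] at hconv
    calc Real.exp (s * Z ω)
        ≤ (1 - Z ω / c) / 2 * Real.exp (-u) + (1 + Z ω / c) / 2 * Real.exp u := hconv
      _ = A + (Z ω / c) * Bq := by rw [hA, hB]; ring
  have hZint : Integrable Z μ := integrable_of_bdd hZm hb
  have hexpint : Integrable (fun ω => Real.exp (s * Z ω)) μ := by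
    apply integrable_of_bdd (by measurability)
    intro ω
    rw [abs_of_pos (Real.exp_pos _)]
    apply Real.exp_le_exp.mpr
    calc s * Z ω ≤ |s * Z ω| := le_abs_self _
      _ = |s| * |Z ω| := abs_mul _ _
      _ ≤ |s| * c := mul_le_mul_of_nonneg_left (hb ω) (abs_nonneg s)
    -- bound : exp (s Z) ≤ exp (|s| * c)
  have hrint : Integrable (fun ω => A + (Z ω / c) * Bq) μ := by
    apply Integrable.add (integrable_const A)
    exact ((hZint.div_const c).mul_const Bq)
  have hint : ∫ ω, Real.exp (s * Z ω) ∂μ ≤ ∫ ω, (A + (Z ω / c) * Bq) ∂μ :=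
    integral_mono hexpint hrint hpt
  have hrval : ∫ ω, (A + (Z ω / c) * Bq) ∂μ = A := by
    rw [integral_add (integrable_const A) ((hZint.div_const c).mul_const Bq)]
    rw [integral_const, probReal_univ]
    simp only [ENNReal.toReal_one, one_smul]
    have : ∫ ω, Z ω / c * Bq ∂μ = (∫ ω, Z ω ∂μ) / c * Bq := by
      rw [integral_mul_const, integral_div]
    rw [this, hmean]
    simp
  have hcosh : A = Real.cosh u := by rw [Real.cosh_eq, hA]
  calc ∫ ω, Real.exp (s * Z ω) ∂μ ≤ A := by rw [← hrval]; exact hint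
    _ = Real.cosh u := hcosh
    _ ≤ Real.exp (u ^ 2 / 2) := Real.cosh_le_exp_half_sq u
    _ = Real.exp ((s * c) ^ 2 / 2) := by rw [hu]

lemma integral_pi_pow {Ω : Type*} [MeasurableSpace Ω] (π : Measure Ω) [IsProbabilityMeasure π]
    (n : ℕ) (h : Ω → ℝ) :
    ∫ D : Fin n → Ω, ∏ i, h (D i) ∂(Measure.pi fun _ => π) = (∫ p, h p ∂π) ^ n := by
  letI : MeasureSpace Ω := ⟨π⟩
  haveI : IsProbabilityMeasure (volume : Measure Ω) := ‹_›
  have hv : (Measure.pi fun _ : Fin n => π) = (volume : Measure (Fin n → Ω)) :=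
    (MeasureTheory.volume_pi).symm
  rw [hv]
  have := MeasureTheory.integral_fintype_prod_eq_pow (ι := Fin n) (μ := π) h
  simpa [← hv] using this

lemma integral_pi_eval {Ω : Type*} [MeasurableSpace Ω] (π : Measure Ω) [IsProbabilityMeasure π]
    {n : ℕ} (i : Fin n) (g : Ω → ℝ) :
    ∫ D : Fin n → Ω, g (D i) ∂(Measure.pi fun _ => π) = ∫ p, g p ∂π := by
  letI : MeasureSpace Ω := ⟨π⟩
  haveI : IsProbabilityMeasure (volume : Measure Ω) := ‹_›
  have hv : (Measure.pi fun _ : Fin n => π) = (volume : Measure (Fin n → Ω)) :=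
    (MeasureTheory.volume_pi).symm
  rw [hv]
  have key := MeasureTheory.integral_fintype_prod_volume_eq_prod (𝕜 := ℝ) (ι := Fin n)
    (fun k (p : Ω) => if k = i then g p else 1)
  have hlhs : ∀ x : Fin n → Ω, (∏ k, if k = i then g (x k) else 1) = g (x i) := by
    intro x
    rw [Finset.prod_ite_eq' Finset.univ i (fun k => g (x k))]
    simp
  simp only [hlhs] at key
  rw [key]
  rw [Finset.prod_eq_single i ?_ (by simp)]
  · simp only [if_pos rfl]
    rfl
  · intro k _ hk
    simp only [if_neg hk]
    simpa using (integral_const (1 : ℝ) (μ := (volume : Measure Ω)))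


set_option maxHeartbeats 1600000 in
/-- Theorem 1 (ii), AEW part: exact oracle inequality for the aggregate with
exponential weights under a convex loss bounded on `[-1, 1]`:
`E[A^φ(f̃ₙ^{AEW}) − A^φ_*] ≤ min_{f∈F} (A^φ(f) − A^φ_*) + C √((log M)/n)`. -/
theorem aew_exact_oracle_inequality (φ : ℝ → ℝ)
    (hφbdd : ∃ B : ℝ, ∀ x ∈ Set.Icc (-1 : ℝ) 1, |φ x| ≤ B)
    (hφconv : ConvexOn ℝ Set.univ φ) :
    ∃ C : ℝ, 0 < C ∧
      ∀ (𝒳 : Type) (_ : MeasurableSpace 𝒳) (M : ℕ), 2 ≤ M →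
      ∀ F : Fin M → 𝒳 → ℝ, (∀ j, Measurable (F j)) →
        (∀ j x, F j x ∈ Set.Icc (-1 : ℝ) 1) →
      ∀ (π : Measure (𝒳 × Bool)), IsProbabilityMeasure π →
      ∀ n : ℕ, 1 ≤ n →
      ∫ D, (phiRisk π φ (aew φ F D) - phiRiskStar π φ)
          ∂(Measure.pi fun _ : Fin n => π)
        ≤ (⨅ j : Fin M, (phiRisk π φ (F j) - phiRiskStar π φ))
            + C * Real.sqrt (Real.log M / n) := by
  obtain ⟨B0, hB0⟩ := hφbdd
  set B := max B0 1 with hBdef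
  have hB1 : (1 : ℝ) ≤ B := le_max_right _ _
  have hBpos : (0 : ℝ) < B := by linarith
  have hφB : ∀ x ∈ Set.Icc (-1 : ℝ) 1, |φ x| ≤ B := fun x hx => (hB0 x hx).trans (le_max_left _ _)
  have hφcont : Continuous φ := by
    rw [← continuousOn_univ]
    exact hφconv.continuousOn isOpen_univ
  have hφm : Measurable φ := hφcont.measurable
  refine ⟨1 + 4 * B, by linarith, ?_⟩
  intro 𝒳 m𝒳 M hM F hFm hF1 π hπ n hn
  haveI : Nonempty (Fin M) := ⟨⟨0, by omega⟩⟩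
  have hn0 : (0 : ℝ) < n := by exact_mod_cast hn
  have hM0 : (0 : ℝ) < M := by exact_mod_cast (by omega : 0 < M)
  have hyI : ∀ (b : Bool) (t : ℝ), t ∈ Set.Icc (-1 : ℝ) 1 → ytoR b * t ∈ Set.Icc (-1 : ℝ) 1 := by
    intro b t ht
    obtain ⟨ht1, ht2⟩ := ht
    cases b <;> simp only [ytoR] <;> constructor <;> simp <;> linarith
  have haewI : ∀ (D : Fin n → 𝒳 × Bool) x, aew φ F D x ∈ Set.Icc (-1 : ℝ) 1 := by
    intro D x
    have hS : 0 < ∑ k, Real.exp (-(n : ℝ) * empRisk φ D (F k)) :=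
      Finset.sum_pos (fun k _ => Real.exp_pos _) Finset.univ_nonempty
    have hw1 : ∑ j, Real.exp (-(n : ℝ) * empRisk φ D (F j)) /
        ∑ k, Real.exp (-(n : ℝ) * empRisk φ D (F k)) = 1 := by
      rw [← Finset.sum_div]; exact div_self hS.ne'
    have hw0 : ∀ j, 0 ≤ Real.exp (-(n : ℝ) * empRisk φ D (F j)) /
        ∑ k, Real.exp (-(n : ℝ) * empRisk φ D (F k)) := fun j => div_nonneg (Real.exp_pos _).le hS.le
    constructor
    · have h := Finset.sum_le_sum (s := Finset.univ) (fun j (_ : j ∈ Finset.univ) =>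
        mul_le_mul_of_nonneg_left (hF1 j x).1 (hw0 j))
      rw [← Finset.sum_mul, hw1] at h
      simp only [aew]; linarith
    · have h := Finset.sum_le_sum (s := Finset.univ) (fun j (_ : j ∈ Finset.univ) =>
        mul_le_mul_of_nonneg_left (hF1 j x).2 (hw0 j))
      rw [← Finset.sum_mul, hw1] at h
      simp only [aew]; linarith
  set μ := Measure.pi (fun _ : Fin n => π) with hμdef
  haveI : IsProbabilityMeasure μ := by rw [hμdef]; infer_instance
  have hL0 : 0 < Real.log M := Real.log_pos (by exact_mod_cast (by omega : 1 < M))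
  have hr0 : 0 < Real.log M / n := div_pos hL0 hn0
  have hsqrtr0 : 0 < Real.sqrt (Real.log M / n) := Real.sqrt_pos.mpr hr0
  -- basic measurability and bounds
  have hytoRm : Measurable ytoR := measurable_of_countable ytoR
  have hgm : ∀ j, Measurable (fun p : 𝒳 × Bool => φ (ytoR p.2 * F j p.1)) := fun j =>
    hφm.comp ((hytoRm.comp measurable_snd).mul ((hFm j).comp measurable_fst))
  have hgB : ∀ j (p : 𝒳 × Bool), |φ (ytoR p.2 * F j p.1)| ≤ B := fun j p =>
    hφB _ (hyI _ _ (hF1 j p.1))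
  have hgInt : ∀ j, Integrable (fun p : 𝒳 × Bool => φ (ytoR p.2 * F j p.1)) π := fun j =>
    integrable_of_bdd (hgm j) (hgB j)
  have haB : ∀ j, |phiRisk π φ (F j)| ≤ B := by
    intro j
    have h := norm_integral_le_of_norm_le_const (μ := π)
      (f := fun p : 𝒳 × Bool => φ (ytoR p.2 * F j p.1)) (C := B)
      (Filter.Eventually.of_forall fun p => by simpa [Real.norm_eq_abs] using hgB j p)
    simpa [phiRisk, Real.norm_eq_abs, measure_univ] using h
  -- the aggregate is measurable
  have haewm : ∀ D : Fin n → 𝒳 × Bool, Measurable (aew φ F D) := by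
    intro D
    apply Finset.measurable_sum
    intro j _
    exact ((hFm j).const_mul _)
  by_cases hInt : Integrable (fun D => phiRisk π φ (aew φ F D) - phiRiskStar π φ) μ
  swap
  · exfalso; apply hInt
    have hem : ∀ j, Measurable (fun D : Fin n → 𝒳 × Bool => empRisk φ D (F j)) := by
      intro j
      simp only [empRisk]
      apply Measurable.const_mul
      apply Finset.measurable_sum
      intro i _
      exact (hgm j).comp (measurable_pi_apply i)
    have hjm : Measurable (fun q : (Fin n → 𝒳 × Bool) × (𝒳 × Bool) =>
        φ (ytoR q.2.2 * aew φ F q.1 q.2.1)) := by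
      apply hφm.comp
      apply (hytoRm.comp measurable_snd.snd).mul
      show Measurable fun q : (Fin n → 𝒳 × Bool) × (𝒳 × Bool) =>
        ∑ j, (Real.exp (-(n : ℝ) * empRisk φ q.1 (F j)) /
          ∑ k, Real.exp (-(n : ℝ) * empRisk φ q.1 (F k))) * F j q.2.1
      apply Finset.measurable_sum; intro j _
      refine Measurable.mul (Measurable.div ?_ ?_) ((hFm j).comp measurable_snd.fst)
      · exact Real.measurable_exp.comp (((hem j).comp measurable_fst).const_mul _)
      · apply Finset.measurable_sum; intro k _
        exact Real.measurable_exp.comp (((hem k).comp measurable_fst).const_mul _)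
    have hPm : Measurable (fun D : Fin n → 𝒳 × Bool => phiRisk π φ (aew φ F D)) :=
      (hjm.stronglyMeasurable.integral_prod_right' (ν := π)).measurable
    refine integrable_of_bdd (c := B + |phiRiskStar π φ|) (hPm.sub measurable_const) ?_
    intro D
    have h := norm_integral_le_of_norm_le_const (μ := π)
      (f := fun p : 𝒳 × Bool => φ (ytoR p.2 * aew φ F D p.1)) (C := B)
      (Filter.Eventually.of_forall fun p => by
        simpa [Real.norm_eq_abs] using hφB _ (hyI _ _ (haewI D p.1)))
    have h' : |phiRisk π φ (aew φ F D)| ≤ B := by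
      simpa [phiRisk, Real.norm_eq_abs, measure_univ] using h
    have h1 := abs_le.mp h'
    rw [abs_le]; constructor <;>
      linarith [le_abs_self (phiRiskStar π φ), neg_abs_le (phiRiskStar π φ)]
  -- integrable case
  have hIntA : Integrable (fun D => phiRisk π φ (aew φ F D)) μ := by
    have h2 := hInt.add (integrable_const (phiRiskStar π φ))
    have heq : (fun D : Fin n → 𝒳 × Bool => phiRisk π φ (aew φ F D))
        = fun D : Fin n → 𝒳 × Bool => (phiRisk π φ (aew φ F D) - phiRiskStar π φ) + phiRiskStar π φ := by
      funext D; ring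
    rw [heq]; exact h2
  -- pointwise bound |phiRisk (aew)| ≤ B
  have haewB : ∀ D : Fin n → 𝒳 × Bool, |phiRisk π φ (aew φ F D)| ≤ B := by
    intro D
    have h := norm_integral_le_of_norm_le_const (μ := π)
      (f := fun p : 𝒳 × Bool => φ (ytoR p.2 * aew φ F D p.1)) (C := B)
      (Filter.Eventually.of_forall fun p => by
        simpa [Real.norm_eq_abs] using hφB (ytoR p.2 * aew φ F D p.1) (hyI _ _ (haewI D p.1)))
    simpa [phiRisk, Real.norm_eq_abs, measure_univ] using h
  -- choose the best function in the family
  obtain ⟨jstar, hjstar⟩ := Finite.exists_min (fun j => phiRisk π φ (F j))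
  have hinf : (⨅ j : Fin M, (phiRisk π φ (F j) - phiRiskStar π φ))
      = phiRisk π φ (F jstar) - phiRiskStar π φ := by
    apply le_antisymm
    · exact ciInf_le (Set.Finite.bddBelow (Set.finite_range _)) jstar
    · exact le_ciInf fun j => by have := hjstar j; linarith
  rw [hinf]
  rw [integral_sub hIntA (integrable_const _), integral_const, probReal_univ]
  simp only [ENNReal.toReal_one, one_smul]
  -- suffices to bound the integral of the risk of the aggregate
  have hsuff : ∫ D, phiRisk π φ (aew φ F D) ∂μ
      ≤ phiRisk π φ (F jstar) + (1 + 4 * B) * Real.sqrt (Real.log M / n) → 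
      ∫ D, phiRisk π φ (aew φ F D) ∂μ - phiRiskStar π φ
      ≤ phiRisk π φ (F jstar) - phiRiskStar π φ + (1 + 4 * B) * Real.sqrt (Real.log M / n) := by
    intro h; linarith
  apply hsuff
  by_cases hrle : Real.log M / n ≤ 1
  swap
  · -- crude case: log M / n > 1
    have hsq1 : 1 ≤ Real.sqrt (Real.log M / n) := by
      rw [show (1:ℝ) = Real.sqrt 1 by simp]
      exact Real.sqrt_le_sqrt (by linarith)
    have hintB : ∫ D, phiRisk π φ (aew φ F D) ∂μ ≤ B := by
      have := integral_mono hIntA (integrable_const B) (fun D => (abs_le.mp (haewB D)).2)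
      simpa [measure_univ] using this
    have hjB : -B ≤ phiRisk π φ (F jstar) := (abs_le.mp (haB jstar)).1
    have hmul : (1 + 4 * B) * 1 ≤ (1 + 4 * B) * Real.sqrt (Real.log M / n) :=
      mul_le_mul_of_nonneg_left hsq1 (by linarith)
    linarith
  -- fine case: log M / n ≤ 1
  set lam := Real.sqrt ((n : ℝ) * Real.log M) / B with hlamdef
  have hlam0 : 0 < lam := div_pos (Real.sqrt_pos.mpr (by positivity)) hBpos
  have hempm : ∀ j, Measurable (fun D : Fin n → 𝒳 × Bool => empRisk φ D (F j)) := by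
    intro j
    simp only [empRisk]
    apply Measurable.const_mul
    apply Finset.measurable_sum
    intro i _
    exact (hgm j).comp (measurable_pi_apply i)
  have hempB : ∀ j (D : Fin n → 𝒳 × Bool), |empRisk φ D (F j)| ≤ B := by
    intro j D
    simp only [empRisk]
    rw [abs_mul, abs_of_pos (by positivity : (0:ℝ) < 1 / (n:ℝ))]
    have habs : |∑ i, φ (ytoR (D i).2 * F j (D i).1)| ≤ (n : ℝ) * B := by
      calc |∑ i, φ (ytoR (D i).2 * F j (D i).1)|
          ≤ ∑ i, |φ (ytoR (D i).2 * F j (D i).1)| := Finset.abs_sum_le_sum_abs _ _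
        _ ≤ ∑ _i : Fin n, B := Finset.sum_le_sum fun i _ => hφB _ (hyI _ _ (hF1 j _))
        _ = (n:ℝ) * B := by
            rw [Finset.sum_const, Finset.card_univ, Fintype.card_fin, nsmul_eq_mul]
    calc (1/(n:ℝ)) * |∑ i, φ (ytoR (D i).2 * F j (D i).1)| ≤ (1/(n:ℝ)) * ((n:ℝ) * B) :=
          mul_le_mul_of_nonneg_left habs (by positivity)
      _ = B := by field_simp
  have hvB : ∀ j (D : Fin n → 𝒳 × Bool), |phiRisk π φ (F j) - empRisk φ D (F j)| ≤ 2 * B := by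
    intro j D
    have h1 := abs_le.mp (haB j)
    have h2 := abs_le.mp (hempB j D)
    rw [abs_le]; constructor <;> linarith
  -- master pointwise inequality
  have master : ∀ D : Fin n → 𝒳 × Bool, phiRisk π φ (aew φ F D)
      ≤ empRisk φ D (F jstar) + Real.log M / n
        + (1 / lam) * Real.log (∑ j, Real.exp (lam * (phiRisk π φ (F j) - empRisk φ D (F j)))) := by
    intro D
    have hSpos : 0 < ∑ k, Real.exp (-(n : ℝ) * empRisk φ D (F k)) :=
      Finset.sum_pos (fun k _ => Real.exp_pos _) Finset.univ_nonempty
    set wD : Fin M → ℝ := fun j =>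
      Real.exp (-(n:ℝ) * empRisk φ D (F j)) / ∑ k, Real.exp (-(n:ℝ) * empRisk φ D (F k)) with hwD
    have hw0 : ∀ j, 0 ≤ wD j := fun j => div_nonneg (Real.exp_pos _).le hSpos.le
    have hw1 : ∑ j, wD j = 1 := by
      simp only [hwD]
      rw [← Finset.sum_div]
      exact div_self hSpos.ne'
    have hjensen : ∀ p : 𝒳 × Bool,
        φ (ytoR p.2 * aew φ F D p.1) ≤ ∑ j, wD j * φ (ytoR p.2 * F j p.1) := by
      intro p
      have hrw : ytoR p.2 * aew φ F D p.1 = ∑ j, wD j • (ytoR p.2 * F j p.1) := by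
        simp only [aew, smul_eq_mul, Finset.mul_sum]
        congr 1; funext j; ring
      rw [hrw]
      have h := hφconv.map_sum_le (t := Finset.univ) (w := wD)
        (p := fun j => ytoR p.2 * F j p.1) (fun j _ => hw0 j) hw1 (fun j _ => Set.mem_univ _)
      simpa [smul_eq_mul] using h
    have hint1 : Integrable (fun p : 𝒳 × Bool => φ (ytoR p.2 * aew φ F D p.1)) π :=
      integrable_of_bdd (hφm.comp ((hytoRm.comp measurable_snd).mul
        ((haewm D).comp measurable_fst))) (fun p => hφB _ (hyI _ _ (haewI D p.1)))
    have hint2 : Integrable (fun p : 𝒳 × Bool => ∑ j, wD j * φ (ytoR p.2 * F j p.1)) π :=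
      integrable_finset_sum _ (fun j _ => (hgInt j).const_mul _)
    have hJ : phiRisk π φ (aew φ F D) ≤ ∑ j, wD j * phiRisk π φ (F j) := by
      have h := integral_mono hint1 hint2 hjensen
      rw [integral_finset_sum _ (fun j _ => (hgInt j).const_mul _)] at h
      simp only [integral_const_mul] at h
      exact h
    have hGibbs : ∑ j, wD j * empRisk φ D (F j) ≤ empRisk φ D (F jstar) + Real.log M / n :=
      gibbs_bound hM hn (fun j => empRisk φ D (F j)) jstar
    have hone : ∀ j, phiRisk π φ (F j) - empRisk φ D (F j)
        ≤ (1/lam) * Real.log (∑ k, Real.exp (lam * (phiRisk π φ (F k) - empRisk φ D (F k)))) := by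
      intro j
      have h1 : Real.exp (lam * (phiRisk π φ (F j) - empRisk φ D (F j)))
          ≤ ∑ k, Real.exp (lam * (phiRisk π φ (F k) - empRisk φ D (F k))) :=
        Finset.single_le_sum
          (f := fun k => Real.exp (lam * (phiRisk π φ (F k) - empRisk φ D (F k))))
          (fun k _ => (Real.exp_pos _).le) (Finset.mem_univ j)
      have h2 : lam * (phiRisk π φ (F j) - empRisk φ D (F j))
          ≤ Real.log (∑ k, Real.exp (lam * (phiRisk π φ (F k) - empRisk φ D (F k)))) := by
        rw [← Real.log_exp (lam * (phiRisk π φ (F j) - empRisk φ D (F j)))]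
        exact Real.log_le_log (Real.exp_pos _) h1
      have h3 := mul_le_mul_of_nonneg_left h2 (le_of_lt (by positivity : (0:ℝ) < 1/lam))
      have h4 : phiRisk π φ (F j) - empRisk φ D (F j)
          = (1/lam) * (lam * (phiRisk π φ (F j) - empRisk φ D (F j))) := by
        rw [← mul_assoc, one_div, inv_mul_cancel₀ hlam0.ne', one_mul]
      rw [h4]
      exact h3
    have hlse : ∑ j, wD j * (phiRisk π φ (F j) - empRisk φ D (F j))
        ≤ (1/lam) * Real.log (∑ j, Real.exp (lam * (phiRisk π φ (F j) - empRisk φ D (F j)))) := by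
      calc ∑ j, wD j * (phiRisk π φ (F j) - empRisk φ D (F j))
          ≤ ∑ j, wD j * ((1/lam) * Real.log (∑ k, Real.exp (lam * (phiRisk π φ (F k) - empRisk φ D (F k))))) :=
            Finset.sum_le_sum fun j _ => mul_le_mul_of_nonneg_left (hone j) (hw0 j)
        _ = (∑ j, wD j) * ((1/lam) * Real.log (∑ k, Real.exp (lam * (phiRisk π φ (F k) - empRisk φ D (F k))))) := by
            rw [← Finset.sum_mul]
        _ = _ := by rw [hw1, one_mul]
    have hsplit : ∑ j, wD j * phiRisk π φ (F j)
        = ∑ j, wD j * empRisk φ D (F j) + ∑ j, wD j * (phiRisk π φ (F j) - empRisk φ D (F j)) := by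
      rw [← Finset.sum_add_distrib]
      congr 1; funext j; ring
    rw [hsplit] at hJ
    linarith
  -- integrability of the pieces
  have hempint : ∀ j, Integrable (fun D : Fin n → 𝒳 × Bool => empRisk φ D (F j)) μ := fun j =>
    integrable_of_bdd (hempm j) (hempB j)
  have hTm : Measurable (fun D : Fin n → 𝒳 × Bool =>
      ∑ j, Real.exp (lam * (phiRisk π φ (F j) - empRisk φ D (F j)))) := by
    apply Finset.measurable_sum
    intro j _
    exact Real.measurable_exp.comp (((hempm j).const_sub _).const_mul lam)
  have hTpos' : ∀ D : Fin n → 𝒳 × Bool,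
      0 < ∑ j, Real.exp (lam * (phiRisk π φ (F j) - empRisk φ D (F j))) :=
    fun D => Finset.sum_pos (fun j _ => Real.exp_pos _) Finset.univ_nonempty
  have hTub : ∀ D : Fin n → 𝒳 × Bool,
      (∑ j, Real.exp (lam * (phiRisk π φ (F j) - empRisk φ D (F j))))
        ≤ (M:ℝ) * Real.exp (lam * (2*B)) := by
    intro D
    calc ∑ j, Real.exp (lam * (phiRisk π φ (F j) - empRisk φ D (F j)))
        ≤ ∑ _j : Fin M, Real.exp (lam * (2*B)) := Finset.sum_le_sum fun j _ =>
          Real.exp_le_exp.mpr (mul_le_mul_of_nonneg_left ((abs_le.mp (hvB j D)).2) hlam0.le)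
      _ = (M:ℝ) * Real.exp (lam * (2*B)) := by
          rw [Finset.sum_const, Finset.card_univ, Fintype.card_fin, nsmul_eq_mul]
  have hTlb : ∀ D : Fin n → 𝒳 × Bool, (M:ℝ) * Real.exp (-(lam * (2*B)))
      ≤ ∑ j, Real.exp (lam * (phiRisk π φ (F j) - empRisk φ D (F j))) := by
    intro D
    have hterm : ∀ j : Fin M, Real.exp (-(lam * (2*B)))
        ≤ Real.exp (lam * (phiRisk π φ (F j) - empRisk φ D (F j))) := by
      intro j
      apply Real.exp_le_exp.mpr
      have h := mul_le_mul_of_nonneg_left (abs_le.mp (hvB j D)).1 hlam0.le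
      linarith
    calc (M:ℝ) * Real.exp (-(lam * (2*B))) = ∑ _j : Fin M, Real.exp (-(lam * (2*B))) := by
          rw [Finset.sum_const, Finset.card_univ, Fintype.card_fin, nsmul_eq_mul]
      _ ≤ ∑ j, Real.exp (lam * (phiRisk π φ (F j) - empRisk φ D (F j))) :=
        Finset.sum_le_sum fun j _ => hterm j
  have hlogB : ∀ D : Fin n → 𝒳 × Bool,
      |Real.log (∑ j, Real.exp (lam * (phiRisk π φ (F j) - empRisk φ D (F j))))|
        ≤ Real.log M + lam * (2*B) := by
    intro D
    rw [abs_le]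
    constructor
    · have h := Real.log_le_log (by positivity) (hTlb D)
      rw [Real.log_mul hM0.ne' (Real.exp_pos _).ne', Real.log_exp] at h
      linarith [hL0, hlam0]
    · have h := Real.log_le_log (hTpos' D) (hTub D)
      rw [Real.log_mul hM0.ne' (Real.exp_pos _).ne', Real.log_exp] at h
      linarith
  have hlogint : Integrable (fun D : Fin n → 𝒳 × Bool =>
      Real.log (∑ j, Real.exp (lam * (phiRisk π φ (F j) - empRisk φ D (F j))))) μ :=
    integrable_of_bdd (Real.measurable_log.comp hTm) hlogB
  have hGint : Integrable (fun D : Fin n → 𝒳 × Bool => empRisk φ D (F jstar) + Real.log M / n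
      + (1/lam) * Real.log (∑ j, Real.exp (lam * (phiRisk π φ (F j) - empRisk φ D (F j))))) μ :=
    ((hempint jstar).add (integrable_const _)).add (hlogint.const_mul _)
  have hstep1 := integral_mono hIntA hGint master
  have hadd1 : ∫ D, (empRisk φ D (F jstar) + Real.log M / n
      + (1/lam) * Real.log (∑ j, Real.exp (lam * (phiRisk π φ (F j) - empRisk φ D (F j))))) ∂μ
      = ∫ D, (empRisk φ D (F jstar) + Real.log M / n) ∂μ
        + ∫ D, (1/lam) * Real.log (∑ j, Real.exp (lam * (phiRisk π φ (F j) - empRisk φ D (F j)))) ∂μ :=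
    integral_add ((hempint jstar).add (integrable_const _)) (hlogint.const_mul _)
  have hadd2 : ∫ D, (empRisk φ D (F jstar) + Real.log M / n) ∂μ
      = (∫ D, empRisk φ D (F jstar) ∂μ) + ∫ _D : Fin n → 𝒳 × Bool, (Real.log M / n : ℝ) ∂μ :=
    integral_add (hempint jstar) (integrable_const _)
  rw [hadd1, hadd2, integral_const, probReal_univ, integral_const_mul] at hstep1
  simp only [ENNReal.toReal_one, one_smul] at hstep1
  have hempval : ∫ D, empRisk φ D (F jstar) ∂μ = phiRisk π φ (F jstar) := by
    simp only [empRisk]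
    have hsum : ∫ D : Fin n → 𝒳 × Bool, (∑ i, φ (ytoR ((D i).2) * F jstar ((D i).1))) ∂μ
        = ∑ i : Fin n, ∫ D : Fin n → 𝒳 × Bool, φ (ytoR ((D i).2) * F jstar ((D i).1)) ∂μ :=
      integral_finset_sum _ (fun i _ => integrable_of_bdd
        ((hgm jstar).comp (measurable_pi_apply i)) (fun D => hgB jstar _))
    rw [integral_const_mul, hsum]
    have hev : ∀ i : Fin n,
        ∫ D : Fin n → 𝒳 × Bool, φ (ytoR ((D i).2) * F jstar ((D i).1)) ∂μ
          = phiRisk π φ (F jstar) := fun i =>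
      integral_pi_eval π i (fun p => φ (ytoR p.2 * F jstar p.1))
    rw [Finset.sum_congr rfl (fun i _ => hev i), Finset.sum_const, Finset.card_univ,
      Fintype.card_fin, nsmul_eq_mul]
    field_simp
  rw [hempval] at hstep1
  -- the moment generating function bound
  have hmean : ∀ j, ∫ p, (phiRisk π φ (F j) - φ (ytoR p.2 * F j p.1)) ∂π = 0 := by
    intro j
    rw [integral_sub (integrable_const _) (hgInt j), integral_const, probReal_univ]
    simp [phiRisk]
  have hZB : ∀ j (p : 𝒳 × Bool), |phiRisk π φ (F j) - φ (ytoR p.2 * F j p.1)| ≤ 2*B := by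
    intro j p
    have h1 := abs_le.mp (haB j)
    have h2 := abs_le.mp (hgB j p)
    rw [abs_le]; constructor <;> linarith
  have hmgf : ∀ j, ∫ D, Real.exp (lam * (phiRisk π φ (F j) - empRisk φ D (F j))) ∂μ
      ≤ Real.exp (2 * lam^2 * B^2 / n) := by
    intro j
    have hrw : ∀ D : Fin n → 𝒳 × Bool, Real.exp (lam * (phiRisk π φ (F j) - empRisk φ D (F j)))
        = ∏ i, Real.exp ((lam/n) * (phiRisk π φ (F j) - φ (ytoR ((D i).2) * F j ((D i).1)))) := by
      intro D
      rw [← Real.exp_sum]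
      congr 1
      rw [← Finset.mul_sum]
      simp only [empRisk]
      rw [Finset.sum_sub_distrib, Finset.sum_const, Finset.card_univ, Fintype.card_fin,
        nsmul_eq_mul]
      field_simp
      try exact Or.inl trivial
    simp_rw [hrw]
    rw [integral_pi_pow π n
      (fun p => Real.exp ((lam/n) * (phiRisk π φ (F j) - φ (ytoR p.2 * F j p.1))))]
    have hfac : ∫ p, Real.exp ((lam/n) * (phiRisk π φ (F j) - φ (ytoR p.2 * F j p.1))) ∂π
        ≤ Real.exp (((lam/n) * (2*B))^2 / 2) :=
      mgf_le_of_bdd π (measurable_const.sub (hgm j)) (by positivity) (hZB j) (hmean j) (lam/n)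
    calc (∫ p, Real.exp ((lam/n) * (phiRisk π φ (F j) - φ (ytoR p.2 * F j p.1))) ∂π)^n
        ≤ (Real.exp (((lam/n) * (2*B))^2 / 2))^n :=
          pow_le_pow_left₀ (integral_nonneg fun p => (Real.exp_pos _).le) hfac n
      _ = Real.exp (2 * lam^2 * B^2 / n) := by
          rw [← Real.exp_nat_mul]
          congr 1
          field_simp
  have hTTint : Integrable (fun D : Fin n → 𝒳 × Bool =>
      ∑ j, Real.exp (lam * (phiRisk π φ (F j) - empRisk φ D (F j)))) μ := by
    apply integrable_of_bdd hTm
    intro D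
    rw [abs_of_pos (hTpos' D)]
    exact hTub D
  have hcTub : ∫ D, (∑ j, Real.exp (lam * (phiRisk π φ (F j) - empRisk φ D (F j)))) ∂μ
      ≤ (M:ℝ) * Real.exp (2 * lam^2 * B^2 / n) := by
    have hsum2 : ∫ D : Fin n → 𝒳 × Bool,
        (∑ j, Real.exp (lam * (phiRisk π φ (F j) - empRisk φ D (F j)))) ∂μ
        = ∑ j, ∫ D : Fin n → 𝒳 × Bool,
            Real.exp (lam * (phiRisk π φ (F j) - empRisk φ D (F j))) ∂μ :=
      integral_finset_sum _ (fun j _ => integrable_of_bdd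
        (Real.measurable_exp.comp (((hempm j).const_sub _).const_mul lam))
        (fun D => by
          rw [abs_of_pos (Real.exp_pos _)]
          exact Real.exp_le_exp.mpr
            (mul_le_mul_of_nonneg_left ((abs_le.mp (hvB j D)).2) hlam0.le)))
    rw [hsum2]
    calc ∑ j, ∫ D, Real.exp (lam * (phiRisk π φ (F j) - empRisk φ D (F j))) ∂μ
        ≤ ∑ _j : Fin M, Real.exp (2 * lam^2 * B^2 / n) := Finset.sum_le_sum fun j _ => hmgf j
      _ = (M:ℝ) * Real.exp (2 * lam^2 * B^2 / n) := by
          rw [Finset.sum_const, Finset.card_univ, Fintype.card_fin, nsmul_eq_mul]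
  have hcT0 : 0 < ∫ D, (∑ j, Real.exp (lam * (phiRisk π φ (F j) - empRisk φ D (F j)))) ∂μ := by
    have h := integral_mono (integrable_const ((M:ℝ) * Real.exp (-(lam * (2*B))))) hTTint hTlb
    rw [integral_const, probReal_univ] at h
    simp only [ENNReal.toReal_one, one_smul] at h
    calc (0:ℝ) < (M:ℝ) * Real.exp (-(lam * (2*B))) := by positivity
      _ ≤ _ := h
  have hlogval : ∫ D, Real.log (∑ j, Real.exp (lam * (phiRisk π φ (F j) - empRisk φ D (F j)))) ∂μ
      ≤ Real.log M + 2 * lam^2 * B^2 / n := by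
    set cT := ∫ D, (∑ j, Real.exp (lam * (phiRisk π φ (F j) - empRisk φ D (F j)))) ∂μ with hcT
    have htang : ∀ D : Fin n → 𝒳 × Bool,
        Real.log (∑ j, Real.exp (lam * (phiRisk π φ (F j) - empRisk φ D (F j))))
          ≤ Real.log cT
            + ((∑ j, Real.exp (lam * (phiRisk π φ (F j) - empRisk φ D (F j)))) - cT) / cT := by
      intro D
      have h := Real.log_le_sub_one_of_pos (div_pos (hTpos' D) hcT0)
      rw [Real.log_div (hTpos' D).ne' hcT0.ne'] at h
      have hd : (∑ j, Real.exp (lam * (phiRisk π φ (F j) - empRisk φ D (F j)))) / cT - 1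
          = ((∑ j, Real.exp (lam * (phiRisk π φ (F j) - empRisk φ D (F j)))) - cT) / cT := by
        field_simp
      rw [hd] at h
      linarith
    have hint3 : Integrable (fun D : Fin n → 𝒳 × Bool => Real.log cT
        + ((∑ j, Real.exp (lam * (phiRisk π φ (F j) - empRisk φ D (F j)))) - cT) / cT) μ :=
      (integrable_const _).add ((hTTint.sub (integrable_const _)).div_const _)
    have h := integral_mono hlogint hint3 htang
    have hadd3 : ∫ D, (Real.log cT
        + ((∑ j, Real.exp (lam * (phiRisk π φ (F j) - empRisk φ D (F j)))) - cT) / cT) ∂μ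
        = (∫ _D : Fin n → 𝒳 × Bool, Real.log cT ∂μ)
          + ∫ D, ((∑ j, Real.exp (lam * (phiRisk π φ (F j) - empRisk φ D (F j)))) - cT) / cT ∂μ :=
      integral_add (integrable_const _) ((hTTint.sub (integrable_const _)).div_const _)
    have hsub3 : ∫ D, ((∑ j, Real.exp (lam * (phiRisk π φ (F j) - empRisk φ D (F j)))) - cT) ∂μ
        = (∫ D, (∑ j, Real.exp (lam * (phiRisk π φ (F j) - empRisk φ D (F j)))) ∂μ)
          - ∫ _D : Fin n → 𝒳 × Bool, (cT : ℝ) ∂μ :=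
      integral_sub hTTint (integrable_const _)
    rw [hadd3, integral_div, hsub3, integral_const, integral_const, probReal_univ] at h
    simp only [ENNReal.toReal_one, one_smul] at h
    rw [← hcT] at h
    have hll : Real.log cT ≤ Real.log M + 2 * lam^2 * B^2 / n := by
      have h2 := Real.log_le_log hcT0 hcTub
      rw [Real.log_mul hM0.ne' (Real.exp_pos _).ne', Real.log_exp] at h2
      exact h2
    have hzero : (cT - cT)/cT = 0 := by rw [sub_self, zero_div]
    rw [hzero] at h
    linarith
  -- combine all the bounds
  have hfinal : ∫ D, phiRisk π φ (aew φ F D) ∂μ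
      ≤ phiRisk π φ (F jstar) + Real.log M / n
        + (1/lam) * (Real.log M + 2 * lam^2 * B^2 / n) := by
    have hlamn : (0:ℝ) ≤ 1/lam := (one_div_pos.mpr hlam0).le
    have h4 := mul_le_mul_of_nonneg_left hlogval hlamn
    linarith [hstep1]
  -- final arithmetic with square roots
  rw [Real.sqrt_div hL0.le ((n : ℝ))]
  set sL := Real.sqrt (Real.log M) with hsLdef
  set sn := Real.sqrt ((n : ℝ)) with hsndef
  have hsn0 : 0 < sn := Real.sqrt_pos.mpr hn0
  have hsL0 : 0 < sL := Real.sqrt_pos.mpr hL0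
  have hsLL : sL * sL = Real.log M := Real.mul_self_sqrt hL0.le
  have hsnn : sn * sn = (n : ℝ) := Real.mul_self_sqrt hn0.le
  have hlam_eq : lam = sn * sL / B := by
    rw [hlamdef, Real.sqrt_mul hn0.le]
  have hratio1 : sL ≤ sn := Real.sqrt_le_sqrt ((div_le_one hn0).mp hrle)
  have hq : (0 : ℝ) ≤ sL / sn := by positivity
  have hr_le : Real.log M / n ≤ sL / sn := by
    have h1 : Real.log M / n = (sL / sn) ^ 2 := by
      rw [div_pow, sq, sq, hsLL, hsnn]
    rw [h1]
    have h2 : sL / sn ≤ 1 := by rw [div_le_one hsn0]; exact hratio1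
    nlinarith
  have hmain_eq : (1 / lam) * (Real.log M + 2 * lam ^ 2 * B ^ 2 / n) = 3 * B * (sL / sn) := by
    rw [hlam_eq, ← hsLL, ← hsnn]
    field_simp
    ring
  rw [hmain_eq] at hfinal
  nlinarith [hfinal, hr_le, hq, hBpos, mul_nonneg hBpos.le hq]
end

section
/- Let (𝒵,𝒯) be a measurable space and let {P_ω : ω ∈ Ω} be a family of probability measures indexed by the cube Ω = {0,1}^m. Let θ ≥ 1 and 0 ≤ α < 2, and assume that H²(P_ω, P_{ω′}) ≤ α whenever ω, ω′ ∈ Ω differ in exactly one coordinate. Then inf_{ŵ} max_{ω∈Ω} E_ω[Σ_{j=1}^m |ŵ_j − ω_j|^θ] ≥ m·2^{−3−θ}·(2−α)², where the infimum is taken over all estimators ŵ with values in [0,1]^m based on one observation from the statistical experiment {P_ω : ω ∈ Ω}, and E_ω denotes expectation under P_ω. -/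
/-!
Fix a coordinate `j` and pair each `ω` with the vertex `ω'` obtained by flipping `ω j`. On
`[0, 1]` one has `|x|^θ + |1 - x|^θ ≥ 2^(1-θ)`, so the `j`-th losses at `ω` and `ω'` add up to
at least `2^(1-θ)`, and Le Cam's two-point argument turns this into
`E_ω + E_ω' ≥ 2^(1-θ) (2 - H²)² / 8`: for the densities `p, q` with respect to `P + Q` one has
`p + q = 1`, hence `H² = 2 - 2 ∫ √(p q)` and `c ∫ p q ≤ E_P f + E_Q g` when `c ≤ f + g`, while
Cauchy–Schwarz gives `(∫ √(p q))² ≤ 2 ∫ p q`. Averaging over `ω` and summing over `j` bounds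
the average risk, hence the maximal one.
-/

open MeasureTheory
open scoped ENNReal NNReal

/-- The squared Hellinger distance
`H²(P,Q) = ∫ (√(dP/dμ) − √(dQ/dμ))² dμ`, computed with the dominating measure `μ = P + Q`. -/
noncomputable def hellingerSq {Z : Type*} [MeasurableSpace Z] (P Q : Measure Z) : ℝ :=
  ∫ z, (Real.sqrt ((P.rnDeriv (P + Q)) z).toReal -
        Real.sqrt ((Q.rnDeriv (P + Q)) z).toReal) ^ 2 ∂(P + Q)

open Finset

section CauchySchwarz

variable {α : Type*} [MeasurableSpace α] {μ : Measure α} [IsFiniteMeasure μ]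

/-- The discriminant of `t ↦ ∫ (f - t)² ∂μ ≥ 0` is nonpositive. -/
lemma sq_integral_le_measureReal_univ_mul_integral_sq {f : α → ℝ} (hf : MemLp f 2 μ) :
    (∫ x, f x ∂μ) ^ 2 ≤ μ.real Set.univ * ∫ x, f x ^ 2 ∂μ := by
  have hf1 : Integrable f μ := hf.integrable one_le_two
  have hf2 : Integrable (fun x => f x ^ 2) μ := hf.integrable_sq
  have hquad : ∀ t : ℝ,
      0 ≤ μ.real Set.univ * (t * t) + (-2 * ∫ x, f x ∂μ) * t + ∫ x, f x ^ 2 ∂μ := by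
    intro t
    have hexpand : ∫ x, (f x - t) ^ 2 ∂μ
        = ∫ x, f x ^ 2 ∂μ - 2 * t * ∫ x, f x ∂μ + μ.real Set.univ * (t * t) := by
      rw [show (fun x => (f x - t) ^ 2) = fun x => f x ^ 2 - 2 * t * f x + t * t by
          ext x; ring,
        integral_add (f := fun x => f x ^ 2 - 2 * t * f x) (hf2.sub (hf1.const_mul (2 * t)))
          (integrable_const _),
        integral_sub (g := fun x => 2 * t * f x) hf2 (hf1.const_mul (2 * t)),
        integral_const_mul, integral_const, smul_eq_mul]
    linarith [integral_nonneg (μ := μ) (f := fun x => (f x - t) ^ 2) fun x => sq_nonneg _]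
  linarith [discrim_le_zero hquad, show discrim (μ.real Set.univ) (-2 * ∫ x, f x ∂μ)
    (∫ x, f x ^ 2 ∂μ) = 4 * ((∫ x, f x ∂μ) ^ 2 - μ.real Set.univ * ∫ x, f x ^ 2 ∂μ) by
      unfold discrim; ring]

end CauchySchwarz

section Hellinger

variable {Z : Type*} [MeasurableSpace Z] (P Q : Measure Z)

noncomputable def hellingerAffinity : ℝ :=
  ∫ z, √((P.rnDeriv (P + Q) z).toReal * (Q.rnDeriv (P + Q) z).toReal) ∂(P + Q)

section SigmaFinite

variable [SigmaFinite P] [SigmaFinite Q]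

lemma ae_toReal_rnDeriv_add_toReal_rnDeriv_eq_one :
    ∀ᵐ z ∂(P + Q), (P.rnDeriv (P + Q) z).toReal + (Q.rnDeriv (P + Q) z).toReal = 1 := by
  filter_upwards [P.rnDeriv_add' Q (P + Q), (P + Q).rnDeriv_self,
    P.rnDeriv_lt_top (P + Q), Q.rnDeriv_lt_top (P + Q)] with z hadd hself hP hQ
  rw [← ENNReal.toReal_add hP.ne hQ.ne, ← Pi.add_apply, ← hadd, hself, ENNReal.toReal_one]

lemma ae_toReal_rnDeriv_mul_toReal_rnDeriv_le_one :
    ∀ᵐ z ∂(P + Q), (P.rnDeriv (P + Q) z).toReal * (Q.rnDeriv (P + Q) z).toReal ≤ 1 := by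
  filter_upwards [ae_toReal_rnDeriv_add_toReal_rnDeriv_eq_one P Q] with z hz
  nlinarith [(P.rnDeriv (P + Q) z).toReal_nonneg, (Q.rnDeriv (P + Q) z).toReal_nonneg]

end SigmaFinite

section Finite

variable [IsFiniteMeasure P] [IsFiniteMeasure Q]

lemma integrable_toReal_rnDeriv_mul_toReal_rnDeriv :
    Integrable (fun z => (P.rnDeriv (P + Q) z).toReal * (Q.rnDeriv (P + Q) z).toReal) (P + Q) := by
  refine .of_bound ((Measure.measurable_rnDeriv P _).ennreal_toReal.mul
    (Measure.measurable_rnDeriv Q _).ennreal_toReal).aestronglyMeasurable 1 ?_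
  filter_upwards [ae_toReal_rnDeriv_mul_toReal_rnDeriv_le_one P Q] with z hz
  rwa [Real.norm_of_nonneg (mul_nonneg ENNReal.toReal_nonneg ENNReal.toReal_nonneg)]

lemma memLp_sqrt_toReal_rnDeriv_mul_toReal_rnDeriv :
    MemLp (fun z => √((P.rnDeriv (P + Q) z).toReal * (Q.rnDeriv (P + Q) z).toReal)) 2 (P + Q) := by
  refine .of_bound ((Measure.measurable_rnDeriv P _).ennreal_toReal.mul
    (Measure.measurable_rnDeriv Q _).ennreal_toReal).sqrt.aestronglyMeasurable 1 ?_
  filter_upwards [ae_toReal_rnDeriv_mul_toReal_rnDeriv_le_one P Q] with z hz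
  rwa [Real.norm_of_nonneg (Real.sqrt_nonneg _), Real.sqrt_le_one]

lemma sq_hellingerAffinity_le :
    hellingerAffinity P Q ^ 2 ≤ (P + Q).real Set.univ *
      ∫ z, (P.rnDeriv (P + Q) z).toReal * (Q.rnDeriv (P + Q) z).toReal ∂(P + Q) := by
  refine (sq_integral_le_measureReal_univ_mul_integral_sq
    (memLp_sqrt_toReal_rnDeriv_mul_toReal_rnDeriv P Q)).trans_eq ?_
  simp_rw [Real.sq_sqrt (mul_nonneg ENNReal.toReal_nonneg ENNReal.toReal_nonneg)]

/-- Since `p, q ≤ 1`, the pointwise bound `c ≤ f + g` gives `c p q ≤ p f + q g`. -/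
lemma mul_integral_toReal_rnDeriv_mul_toReal_rnDeriv_le {f g : Z → ℝ} {c : ℝ}
    (hf₀ : 0 ≤ f) (hg₀ : 0 ≤ g) (hf : Integrable f P) (hg : Integrable g Q)
    (hfg : ∀ z, c ≤ f z + g z) :
    c * ∫ z, (P.rnDeriv (P + Q) z).toReal * (Q.rnDeriv (P + Q) z).toReal ∂(P + Q)
      ≤ ∫ z, f z ∂P + ∫ z, g z ∂Q := by
  have hPμ : P ≪ P + Q := Measure.AbsolutelyContinuous.rfl.add_right Q
  have hQμ : Q ≪ P + Q := Measure.AbsolutelyContinuous.rfl.add_right' P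
  rw [← integral_toReal_rnDeriv_mul hPμ, ← integral_toReal_rnDeriv_mul hQμ,
    ← integral_add ((integrable_toReal_rnDeriv_mul_iff hPμ).2 hf)
      ((integrable_toReal_rnDeriv_mul_iff hQμ).2 hg), ← integral_const_mul]
  refine integral_mono_ae ((integrable_toReal_rnDeriv_mul_toReal_rnDeriv P Q).const_mul c)
    (((integrable_toReal_rnDeriv_mul_iff hPμ).2 hf).add
      ((integrable_toReal_rnDeriv_mul_iff hQμ).2 hg)) ?_
  filter_upwards [ae_toReal_rnDeriv_add_toReal_rnDeriv_eq_one P Q] with z hz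
  set p := (P.rnDeriv (P + Q) z).toReal
  set q := (Q.rnDeriv (P + Q) z).toReal
  have hp : 0 ≤ p := ENNReal.toReal_nonneg
  have hq : 0 ≤ q := ENNReal.toReal_nonneg
  calc c * (p * q) ≤ (f z + g z) * (p * q) := by gcongr; exact hfg z
    _ = p * f z * q + q * g z * p := by ring
    _ ≤ p * f z + q * g z :=
        add_le_add (mul_le_of_le_one_right (mul_nonneg hp (hf₀ z)) (by linarith))
          (mul_le_of_le_one_right (mul_nonneg hq (hg₀ z)) (by linarith))

end Finite

variable [IsProbabilityMeasure P] [IsProbabilityMeasure Q]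

lemma hellingerSq_eq_two_sub_two_mul_hellingerAffinity :
    hellingerSq P Q = 2 - 2 * hellingerAffinity P Q := by
  have hpointwise : ∀ᵐ z ∂(P + Q),
      (√(P.rnDeriv (P + Q) z).toReal - √(Q.rnDeriv (P + Q) z).toReal) ^ 2
        = 1 - 2 * √((P.rnDeriv (P + Q) z).toReal * (Q.rnDeriv (P + Q) z).toReal) := by
    filter_upwards [ae_toReal_rnDeriv_add_toReal_rnDeriv_eq_one P Q] with z hz
    rw [sub_sq, Real.sq_sqrt ENNReal.toReal_nonneg, Real.sq_sqrt ENNReal.toReal_nonneg,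
      Real.sqrt_mul ENNReal.toReal_nonneg]
    linarith
  rw [hellingerSq, integral_congr_ae hpointwise, integral_sub (integrable_const _)
    (((memLp_sqrt_toReal_rnDeriv_mul_toReal_rnDeriv P Q).integrable one_le_two).const_mul 2),
    integral_const_mul, integral_const, smul_eq_mul, mul_one, measureReal_add_apply,
    probReal_univ, probReal_univ, hellingerAffinity]
  ring

lemma mul_two_sub_hellingerSq_sq_div_eight_le {f g : Z → ℝ} {c : ℝ} (hc : 0 ≤ c)
    (hf₀ : 0 ≤ f) (hg₀ : 0 ≤ g) (hf : Integrable f P) (hg : Integrable g Q)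
    (hfg : ∀ z, c ≤ f z + g z) :
    c * (2 - hellingerSq P Q) ^ 2 / 8 ≤ ∫ z, f z ∂P + ∫ z, g z ∂Q := by
  have hμ : (P + Q).real Set.univ = 2 := by
    rw [measureReal_add_apply, probReal_univ, probReal_univ]; norm_num
  have haff := sq_hellingerAffinity_le P Q
  rw [hμ] at haff
  calc c * (2 - hellingerSq P Q) ^ 2 / 8 = c * (hellingerAffinity P Q ^ 2 / 2) := by
        rw [hellingerSq_eq_two_sub_two_mul_hellingerAffinity]; ring
    _ ≤ c * ∫ z, (P.rnDeriv (P + Q) z).toReal * (Q.rnDeriv (P + Q) z).toReal ∂(P + Q) := by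
        gcongr; linarith
    _ ≤ ∫ z, f z ∂P + ∫ z, g z ∂Q :=
        mul_integral_toReal_rnDeriv_mul_toReal_rnDeriv_le P Q hf₀ hg₀ hf hg hfg

end Hellinger

lemma two_rpow_one_sub_le_rpow_add_rpow {θ a b : ℝ} (hθ : 1 ≤ θ) (ha : 0 ≤ a) (hb : 0 ≤ b)
    (hab : a + b = 1) : (2 : ℝ) ^ (1 - θ) ≤ a ^ θ + b ^ θ := by
  lift a to ℝ≥0 using ha
  lift b to ℝ≥0 using hb
  have hmean := NNReal.rpow_add_le_mul_rpow_add_rpow a b hθ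
  rw [show a + b = 1 by exact_mod_cast hab, NNReal.one_rpow] at hmean
  have hmean' : (1 : ℝ) ≤ 2 ^ (θ - 1) * (a ^ θ + b ^ θ) := by exact_mod_cast hmean
  calc (2 : ℝ) ^ (1 - θ) ≤ 2 ^ (1 - θ) * (2 ^ (θ - 1) * (a ^ θ + b ^ θ)) :=
        le_mul_of_one_le_right (by positivity) hmean'
    _ = a ^ θ + b ^ θ := by
        rw [← mul_assoc, ← Real.rpow_add two_pos]; norm_num

lemma two_rpow_one_sub_le_rpow_abs_sub_add_rpow_abs_sub {θ x : ℝ} (hθ : 1 ≤ θ)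
    (hx : x ∈ Set.Icc (0 : ℝ) 1) (b : Bool) :
    (2 : ℝ) ^ (1 - θ) ≤
      |x - (if b then 1 else 0)| ^ θ + |x - (if !b then 1 else 0)| ^ θ := by
  have h := two_rpow_one_sub_le_rpow_add_rpow hθ hx.1 (sub_nonneg.2 hx.2) (add_sub_cancel x 1)
  have habs₀ : |x - 0| = x := by rw [sub_zero, abs_of_nonneg hx.1]
  have habs₁ : |x - 1| = 1 - x := by rw [abs_sub_comm, abs_of_nonneg (sub_nonneg.2 hx.2)]
  cases b
  · simpa only [Bool.not_false, if_true, Bool.false_eq_true, if_false, habs₀, habs₁] using h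
  · simpa only [Bool.not_true, if_true, Bool.false_eq_true, if_false, habs₀, habs₁, add_comm]
      using h

lemma rpow_abs_sub_ite_le_one {θ x : ℝ} (hθ : 0 ≤ θ) (hx : x ∈ Set.Icc (0 : ℝ) 1) (b : Bool) :
    |x - (if b then 1 else 0)| ^ θ ≤ 1 := by
  refine Real.rpow_le_one (abs_nonneg _) (abs_sub_le_of_nonneg_of_le hx.1 hx.2 ?_ ?_) hθ <;>
    split_ifs <;> norm_num

section Cube

variable {ι : Type*} [DecidableEq ι]

lemma involutive_update_not (j : ι) :
    Function.Involutive fun ω : ι → Bool => Function.update ω j (!ω j) := by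
  intro ω
  simp

variable [Fintype ι]

lemma card_filter_ne_update_not (ω : ι → Bool) (j : ι) :
    (univ.filter fun i => ω i ≠ Function.update ω j (!ω j) i).card = 1 := by
  rw [card_eq_one]
  refine ⟨j, ?_⟩
  ext i
  by_cases h : i = j
  · subst h; simp
  · simp [h]

/-- Summing the hypothesis over all `ω` and `j` counts each flipped pair `{ω, ω'}` twice. -/
lemma exists_card_mul_div_two_le_sum {F : (ι → Bool) → ι → ℝ} {B : ℝ}
    (hF : ∀ ω j, B ≤ F ω j + F (Function.update ω j (!ω j)) j) :
    ∃ ω, Fintype.card ι * B / 2 ≤ ∑ j, F ω j := by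
  have hcoord : ∀ j, 2 ^ Fintype.card ι * B ≤ 2 * ∑ ω, F ω j := fun j =>
    calc (2 : ℝ) ^ Fintype.card ι * B = ∑ _ω : ι → Bool, B := by
          simp [Fintype.card_bool]
      _ ≤ ∑ ω, (F ω j + F (Function.update ω j (!ω j)) j) := sum_le_sum fun ω _ => hF ω j
      _ = 2 * ∑ ω, F ω j := by
          rw [sum_add_distrib, two_mul,
            Fintype.sum_equiv ((involutive_update_not j).toPerm _)
              (fun ω => F (Function.update ω j (!ω j)) j) (fun ω => F ω j) fun _ => rfl]
  have htotal : ∑ _ω : ι → Bool, (Fintype.card ι * B / 2) ≤ ∑ ω, ∑ j, F ω j :=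
    calc ∑ _ω : ι → Bool, (Fintype.card ι * B / 2)
        = ∑ _j : ι, (2 : ℝ) ^ Fintype.card ι * B / 2 := by
          simp [Fintype.card_bool]; ring
      _ ≤ ∑ j, ∑ ω, F ω j := sum_le_sum fun j _ => by linarith [hcoord j]
      _ = ∑ ω, ∑ j, F ω j := sum_comm
  obtain ⟨ω, -, hω⟩ := exists_le_of_sum_le univ_nonempty htotal
  exact ⟨ω, hω⟩

end Cube

theorem assouad_lemma_general {Z : Type*} [MeasurableSpace Z] (m : ℕ)
    (P : (Fin m → Bool) → Measure Z) (hP : ∀ ω, IsProbabilityMeasure (P ω))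
    (θ : ℝ) (hθ : 1 ≤ θ) (α : ℝ) (hα2 : α < 2)
    (hH : ∀ ω ω' : Fin m → Bool,
      (Finset.univ.filter fun j => ω j ≠ ω' j).card = 1 → hellingerSq (P ω) (P ω') ≤ α)
    (what : Z → Fin m → ℝ) (hwhat : Measurable what)
    (hwhat01 : ∀ z j, what z j ∈ Set.Icc (0 : ℝ) 1) :
    ∃ ω : Fin m → Bool,
      ∫ z, (∑ j, |what z j - (if ω j then 1 else 0)| ^ θ) ∂(P ω)
        ≥ (m : ℝ) * 2 ^ (-3 - θ) * (2 - α) ^ 2 := by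
  set loss : Fin m → Bool → Z → ℝ := fun j b z => |what z j - (if b then 1 else 0)| ^ θ
  have hloss_nonneg : ∀ j b, 0 ≤ loss j b := fun j b z => by positivity
  have hloss_meas : ∀ j b, Measurable (loss j b) := fun j b =>
    (((measurable_pi_apply j).comp hwhat).sub_const _).abs.pow_const θ
  have hloss_int : ∀ ω j b, Integrable (loss j b) (P ω) := fun ω j b =>
    .of_bound (hloss_meas j b).aestronglyMeasurable 1 <| ae_of_all _ fun z => by
      rw [Real.norm_of_nonneg (hloss_nonneg j b z)]
      exact rpow_abs_sub_ite_le_one (by linarith) (hwhat01 z j) b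
  have hpair : ∀ ω j, 2 ^ (1 - θ) * (2 - α) ^ 2 / 8 ≤ ∫ z, loss j (ω j) z ∂P ω +
      ∫ z, loss j (Function.update ω j (!ω j) j) z ∂P (Function.update ω j (!ω j)) := by
    intro ω j
    calc 2 ^ (1 - θ) * (2 - α) ^ 2 / 8
        ≤ 2 ^ (1 - θ) * (2 - hellingerSq (P ω) (P (Function.update ω j (!ω j)))) ^ 2 / 8 := by
          gcongr
          exact hH _ _ (card_filter_ne_update_not ω j)
      _ ≤ _ := by
          rw [Function.update_self]
          exact mul_two_sub_hellingerSq_sq_div_eight_le _ _ (by positivity) (hloss_nonneg j _)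
            (hloss_nonneg j _) (hloss_int _ j _) (hloss_int _ j _)
            fun z => two_rpow_one_sub_le_rpow_abs_sub_add_rpow_abs_sub hθ (hwhat01 z j) (ω j)
  obtain ⟨ω, hω⟩ := exists_card_mul_div_two_le_sum hpair
  refine ⟨ω, ?_⟩
  rw [integral_finsetSum _ fun j _ => hloss_int ω j (ω j), ge_iff_le]
  convert hω using 1
  rw [Fintype.card_fin, show 1 - θ = 4 + (-3 - θ) by ring, Real.rpow_add two_pos]
  norm_num
  ring

/-- Assouad's lemma, Lemma 1: if `{P_ω : ω ∈ {0,1}^m}` are probability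
measures with `H²(P_ω, P_{ω'}) ≤ α < 2` whenever `ω` and `ω'` differ in exactly one coordinate,
then every estimator `ŵ : 𝒵 → [0,1]^m` based on one observation satisfies
`max_{ω} E_ω[Σ_j |ŵ_j − ω_j|^θ] ≥ m 2^{−3−θ} (2−α)²` for every `θ ≥ 1`. -/
theorem assouad_lemma {Z : Type*} [MeasurableSpace Z] (m : ℕ)
    (P : (Fin m → Bool) → Measure Z) (hP : ∀ ω, IsProbabilityMeasure (P ω))
    (θ : ℝ) (hθ : 1 ≤ θ) (α : ℝ) (hα0 : 0 ≤ α) (hα2 : α < 2)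
    (hH : ∀ ω ω' : Fin m → Bool,
      (Finset.univ.filter fun j => ω j ≠ ω' j).card = 1 → hellingerSq (P ω) (P ω') ≤ α)
    (what : Z → Fin m → ℝ) (hwhat : Measurable what)
    (hwhat01 : ∀ z j, what z j ∈ Set.Icc (0 : ℝ) 1) :
    ∃ ω : Fin m → Bool,
      ∫ z, (∑ j, |what z j - (if ω j then 1 else 0)| ^ θ) ∂(P ω)
        ≥ (m : ℝ) * 2 ^ (-3 - θ) * (2 - α) ^ 2 :=
  assouad_lemma_general m P hP θ hθ α hα2 hH what hwhat hwhat01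
end

section
/- Let F be a finite set of measurable functions from 𝒳 to [−1,1] and let 𝒞 be the convex hull of F. Then for every probability distribution π of (X,Y), min_{f∈𝒞} A_1(f) = min_{f∈F} A_1(f), where A_1 is the hinge risk. Consequently min_{f∈𝒞}(A_1(f) − A_1^*) = min_{f∈F}(A_1(f) − A_1^*). -/
open MeasureTheory
open scoped ENNReal NNReal

lemma ytoR_abs (b : Bool) : |ytoR b| = 1 := by cases b <;> simp [ytoR]

lemma hinge_eq {y g : ℝ} (hy : |y| = 1) (hg : |g| ≤ 1) :
    max 0 (1 - y * g) = 1 - y * g := by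
  have : y * g ≤ 1 := by
    calc y * g ≤ |y * g| := le_abs_self _
    _ = |y| * |g| := abs_mul y g
    _ ≤ 1 := by rw [hy]; simpa using hg
  exact max_eq_right (by linarith)

lemma integrable_hinge {𝒳 : Type*} [MeasurableSpace 𝒳]
    (π : Measure (𝒳 × Bool)) [IsProbabilityMeasure π]
    (f : 𝒳 → ℝ) (hf : Measurable f) (hf1 : ∀ x, |f x| ≤ 1) :
    Integrable (fun p : 𝒳 × Bool => max 0 (1 - ytoR p.2 * f p.1)) π := by
  have hm : Measurable (fun p : 𝒳 × Bool => max 0 (1 - ytoR p.2 * f p.1)) := by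
    apply Measurable.max measurable_const
    exact measurable_const.sub
      (((Measurable.of_discrete (f := ytoR)).comp measurable_snd).mul (hf.comp measurable_fst))
  refine Integrable.mono' (integrable_const (2:ℝ)) hm.aestronglyMeasurable ?_
  filter_upwards with p
  have := hinge_eq (ytoR_abs p.2) (hf1 p.1)
  rw [this, Real.norm_eq_abs]
  have h1 : |ytoR p.2 * f p.1| ≤ 1 := by
    rw [abs_mul, ytoR_abs]; simpa using hf1 p.1
  rw [abs_of_nonneg (by cases abs_le.mp h1; linarith)]
  cases abs_le.mp h1; linarith

lemma risk_convex {𝒳 : Type*} [MeasurableSpace 𝒳]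
    (M : ℕ) (F : Fin M → 𝒳 → ℝ) (hF : ∀ j, Measurable (F j))
    (hF1 : ∀ j x, F j x ∈ Set.Icc (-1 : ℝ) 1)
    (π : Measure (𝒳 × Bool)) [IsProbabilityMeasure π]
    (lam : Fin M → ℝ) (h0 : ∀ j, 0 ≤ lam j) (h1 : (∑ j, lam j) = 1) :
    phiRisk π (fun x => max 0 (1 - x)) (fun x => ∑ j, lam j * F j x)
      = ∑ j, lam j * phiRisk π (fun x => max 0 (1 - x)) (F j) := by
  have habs : ∀ j x, |F j x| ≤ 1 := fun j x => abs_le.mpr ⟨(hF1 j x).1, (hF1 j x).2⟩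
  have hgabs : ∀ x, |∑ j, lam j * F j x| ≤ 1 := by
    intro x
    calc |∑ j, lam j * F j x| ≤ ∑ j, |lam j * F j x| := Finset.abs_sum_le_sum_abs _ _
    _ ≤ ∑ j, lam j := by
        apply Finset.sum_le_sum
        intro j _
        rw [abs_mul, abs_of_nonneg (h0 j)]
        nlinarith [habs j x, h0 j, abs_nonneg (F j x)]
    _ = 1 := h1
  unfold phiRisk
  have key : ∀ p : 𝒳 × Bool,
      max 0 (1 - ytoR p.2 * ∑ j, lam j * F j p.1)
        = ∑ j, lam j * max 0 (1 - ytoR p.2 * F j p.1) := by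
    intro p
    rw [hinge_eq (ytoR_abs p.2) (hgabs p.1)]
    have : ∀ j ∈ Finset.univ, lam j * max 0 (1 - ytoR p.2 * F j p.1)
        = lam j * (1 - ytoR p.2 * F j p.1) := by
      intro j _
      rw [hinge_eq (ytoR_abs p.2) (habs j p.1)]
    rw [Finset.sum_congr rfl this]
    have h2 : ∑ j, lam j * (1 - ytoR p.2 * F j p.1)
        = ∑ j, (lam j - ytoR p.2 * (lam j * F j p.1)) :=
      Finset.sum_congr rfl (fun j _ => by ring)
    rw [h2, Finset.sum_sub_distrib, h1, ← Finset.mul_sum]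
  simp_rw [key]
  rw [integral_finset_sum]
  · congr 1
    ext j
    rw [integral_const_mul]
  · intro j _
    exact (integrable_hinge π (F j) (hF j) (fun x => habs j x)).const_mul _

lemma simplex_inf (M : ℕ) (hM : 1 ≤ M) (a : Fin M → ℝ) :
    sInf {r : ℝ | ∃ lam : Fin M → ℝ, (∀ j, 0 ≤ lam j) ∧ (∑ j, lam j) = 1 ∧
        r = ∑ j, lam j * a j} = ⨅ j, a j := by
  haveI : Nonempty (Fin M) := ⟨⟨0, hM⟩⟩
  obtain ⟨j0, hj0⟩ := Finite.exists_min a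
  have hinf : (⨅ j, a j) = a j0 :=
    le_antisymm (ciInf_le (Finite.bddBelow_range a) j0) (le_ciInf hj0)
  rw [hinf]
  have hmem : a j0 ∈ {r : ℝ | ∃ lam : Fin M → ℝ, (∀ j, 0 ≤ lam j) ∧ (∑ j, lam j) = 1 ∧
      r = ∑ j, lam j * a j} := by
    refine ⟨fun j => if j = j0 then 1 else 0, ?_, ?_, ?_⟩
    · intro j; positivity
    · simp
    · simp [ite_mul]
  have hlb : ∀ r ∈ {r : ℝ | ∃ lam : Fin M → ℝ, (∀ j, 0 ≤ lam j) ∧ (∑ j, lam j) = 1 ∧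
      r = ∑ j, lam j * a j}, a j0 ≤ r := by
    rintro r ⟨lam, h0, h1, rfl⟩
    calc a j0 = ∑ j, lam j * a j0 := by rw [← Finset.sum_mul, h1, one_mul]
    _ ≤ ∑ j, lam j * a j :=
        Finset.sum_le_sum (fun j _ => mul_le_mul_of_nonneg_left (hj0 j) (h0 j))
  exact le_antisymm (csInf_le ⟨a j0, hlb⟩ hmem) (le_csInf ⟨_, hmem⟩ hlb)

/-- for the hinge loss `φ₁(x) = max(0, 1−x)`, the minimal hinge risk over the
convex hull `𝒞` of a finite family `F` equals the minimal hinge risk over `F`; consequently the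
same holds for the excess risks `A₁(f) − A₁^*`. -/
theorem hinge_risk_convex_hull {𝒳 : Type*} [MeasurableSpace 𝒳]
    (M : ℕ) (hM : 1 ≤ M) (F : Fin M → 𝒳 → ℝ) (hF : ∀ j, Measurable (F j))
    (hF1 : ∀ j x, F j x ∈ Set.Icc (-1 : ℝ) 1)
    (π : Measure (𝒳 × Bool)) [IsProbabilityMeasure π] :
    (sInf {r : ℝ | ∃ lam : Fin M → ℝ, (∀ j, 0 ≤ lam j) ∧ (∑ j, lam j) = 1 ∧
          r = phiRisk π (fun x => max 0 (1 - x)) (fun x => ∑ j, lam j * F j x)}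
        = ⨅ j : Fin M, phiRisk π (fun x => max 0 (1 - x)) (F j)) ∧
    (sInf {r : ℝ | ∃ lam : Fin M → ℝ, (∀ j, 0 ≤ lam j) ∧ (∑ j, lam j) = 1 ∧
          r = phiRisk π (fun x => max 0 (1 - x)) (fun x => ∑ j, lam j * F j x)
                - phiRiskStar π (fun x => max 0 (1 - x))}
        = ⨅ j : Fin M, (phiRisk π (fun x => max 0 (1 - x)) (F j)
                - phiRiskStar π (fun x => max 0 (1 - x)))) := by
  set a : Fin M → ℝ := fun j => phiRisk π (fun x => max 0 (1 - x)) (F j) with ha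
  set c : ℝ := phiRiskStar π (fun x => max 0 (1 - x)) with hc
  constructor
  · have hset : {r : ℝ | ∃ lam : Fin M → ℝ, (∀ j, 0 ≤ lam j) ∧ (∑ j, lam j) = 1 ∧
          r = phiRisk π (fun x => max 0 (1 - x)) (fun x => ∑ j, lam j * F j x)}
        = {r : ℝ | ∃ lam : Fin M → ℝ, (∀ j, 0 ≤ lam j) ∧ (∑ j, lam j) = 1 ∧
          r = ∑ j, lam j * a j} := by
      ext r
      exact exists_congr fun lam => and_congr_right fun h0 => and_congr_right fun h1 => by
        rw [risk_convex M F hF hF1 π lam h0 h1]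
    rw [hset, simplex_inf M hM a]
  · have hset : {r : ℝ | ∃ lam : Fin M → ℝ, (∀ j, 0 ≤ lam j) ∧ (∑ j, lam j) = 1 ∧
          r = phiRisk π (fun x => max 0 (1 - x)) (fun x => ∑ j, lam j * F j x) - c}
        = {r : ℝ | ∃ lam : Fin M → ℝ, (∀ j, 0 ≤ lam j) ∧ (∑ j, lam j) = 1 ∧
          r = ∑ j, lam j * (a j - c)} := by
      ext r
      refine exists_congr fun lam => and_congr_right fun h0 => and_congr_right fun h1 => ?_
      rw [risk_convex M F hF hF1 π lam h0 h1]
      have : ∑ j, lam j * (a j - c) = (∑ j, lam j * a j) - (∑ j, lam j) * c := by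
        rw [Finset.sum_mul, ← Finset.sum_sub_distrib]
        exact Finset.sum_congr rfl fun j _ => by ring
      rw [this, h1, one_mul]
    rw [hset, simplex_inf M hM (fun j => a j - c)]
end

section
/- In the cube construction with parameters 0 < h ≤ 1/2 and 0 ≤ w ≤ 1, and for any fixed j ∈ {1,…,M}: under π_j the Bayes classifier is f* ≡ 1; the classifier f_j minimizes the 0–1 risk A^{φ₀} over F = {f₁,…,f_M}; and for every k ≠ j, A^{φ₀}(f_k) − A^{φ₀}(f_j) = (1−w)h/4. -/
open MeasureTheory
open scoped ENNReal NNReal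

/-- The joint distribution `π = (P^X, η)` on `𝒳 × {−1,1}` of a pair `(X,Y)` where `X` has law
`P^X` and `P(Y = 1 | X = x) = η(x)` (the label `1` is encoded by `true`, `−1` by `false`). -/
noncomputable def jointMeasure {𝒳 : Type*} [MeasurableSpace 𝒳]
    (PX : Measure 𝒳) (η : 𝒳 → ℝ) : Measure (𝒳 × Bool) :=
  PX.bind fun x =>
    ENNReal.ofReal (η x) • Measure.dirac (x, true) +
      ENNReal.ofReal (1 - η x) • Measure.dirac (x, false)

/-- The Bernoulli measure on `Bool` giving mass `p` to `true` and `1 − p` to `false`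
(`true` encodes `1` and `false` encodes `−1`). -/
noncomputable def bern (p : ℝ) : Measure Bool :=
  ENNReal.ofReal p • Measure.dirac true + ENNReal.ofReal (1 - p) • Measure.dirac false

/-- The marginal `P^X` of the cube construction on `𝒳 = {−1,1}^{M+1}`: the coordinates are
independent, `P^X(x⁰ = 1) = w` and `P^X(x^j = 1) = 1/2` for `j = 1, …, M`. -/
noncomputable def cubePX (M : ℕ) (w : ℝ) : Measure (Fin (M + 1) → Bool) :=
  Measure.pi fun i => if i = 0 then bern w else bern (1 / 2)

/-- The conditional probability function `η^{(j)}` of the cube construction: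
`η^{(j)}(x) = 1` if `x⁰ = 1`; `1/2 + h` if `x⁰ = −1, x^j = 1`; `1/2 + h/2` if `x⁰ = −1, x^j = −1`. -/
noncomputable def cubeEta (M : ℕ) (h : ℝ) (j : Fin M) (x : Fin (M + 1) → Bool) : ℝ :=
  if x 0 then 1 else if x j.succ then 1 / 2 + h else 1 / 2 + h / 2

/-- The classifiers `f_k(x) = x^k`, `k = 1, …, M`, of the cube construction. -/
noncomputable def cubeF (M : ℕ) (k : Fin M) (x : Fin (M + 1) → Bool) : ℝ :=
  if x k.succ then 1 else -1

/-!
Since `η^{(j)} > 1/2` everywhere, the conditional 0–1 risk `η · 1{f ≤ 0} + (1 − η) · 1{f ≥ 0}`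
of any prediction at `x` is at least `1 − η(x)`, which the constant prediction `1` attains; hence
`f* ≡ 1`. The coordinates of `X` are independent under `P^X`, so the risk of `f_j`, a function of
`(x⁰, x^j)`, is an iterated Bernoulli integral equal to `w/2 + (1 − w)(1/2 − h/4)`. For `k ≠ j` the
prediction `x^k` is a fair coin independent of `η^{(j)}(X)`, so `f_k` errs with probability `1/2`.
-/

section ProductCoordinates

variable {ι : Type*} [Fintype ι] {E : ι → Type*} [∀ i, MeasurableSpace (E i)]
  (μ : (i : ι) → Measure (E i)) [∀ i, IsProbabilityMeasure (μ i)]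

theorem map_pi_eval_prodMk {a b : ι} (hab : a ≠ b) :
    (Measure.pi μ).map (fun x => (x a, x b)) = (μ a).prod (μ b) := by
  have hind := (ProbabilityTheory.iIndepFun_pi (X := fun _ x => x) (μ := μ)
    fun _ => aemeasurable_id).indepFun hab
  rw [(ProbabilityTheory.indepFun_iff_map_prod_eq_prod_map_map (measurable_pi_apply _).aemeasurable
      (measurable_pi_apply _).aemeasurable).1 hind,
    (measurePreserving_eval μ a).map_eq, (measurePreserving_eval μ b).map_eq]

theorem map_pi_eval_prodMk_prodMk {a b c : ι} (hab : a ≠ b) (hac : a ≠ c) (hbc : b ≠ c) :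
    (Measure.pi μ).map (fun x => ((x a, x b), x c)) = ((μ a).prod (μ b)).prod (μ c) := by
  have hind := (ProbabilityTheory.iIndepFun_pi (X := fun _ x => x) (μ := μ)
    fun _ => aemeasurable_id).indepFun_prodMk (fun i => measurable_pi_apply i) a b c hac hbc
  rw [(ProbabilityTheory.indepFun_iff_map_prod_eq_prod_map_map
      ((measurable_pi_apply a).prodMk (measurable_pi_apply b)).aemeasurable
      (measurable_pi_apply c).aemeasurable).1 hind,
    map_pi_eval_prodMk μ hab, (measurePreserving_eval μ c).map_eq]

theorem integral_pi_comp_eval₂ {a b : ι} (hab : a ≠ b) (F : E a → E b → ℝ)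
    (hF : Integrable (Function.uncurry F) ((μ a).prod (μ b))) :
    ∫ x, F (x a) (x b) ∂Measure.pi μ = ∫ s, ∫ t, F s t ∂μ b ∂μ a := by
  rw [← map_pi_eval_prodMk μ hab] at hF
  calc ∫ x, F (x a) (x b) ∂Measure.pi μ
      = ∫ p, Function.uncurry F p ∂(Measure.pi μ).map (fun x => (x a, x b)) :=
        (integral_map (by fun_prop) hF.aestronglyMeasurable).symm
    _ = ∫ s, ∫ t, F s t ∂μ b ∂μ a := by
        rw [map_pi_eval_prodMk μ hab] at hF ⊢
        exact integral_prod _ hF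

theorem integral_pi_comp_eval₃ {a b c : ι} (hab : a ≠ b) (hac : a ≠ c) (hbc : b ≠ c)
    (F : E a → E b → E c → ℝ)
    (hF : Integrable (fun p : (E a × E b) × E c => F p.1.1 p.1.2 p.2)
      (((μ a).prod (μ b)).prod (μ c))) :
    ∫ x, F (x a) (x b) (x c) ∂Measure.pi μ = ∫ s, ∫ t, ∫ u, F s t u ∂μ c ∂μ b ∂μ a := by
  have hF₂ : Integrable (fun p : E a × E b => ∫ u, F p.1 p.2 u ∂μ c) ((μ a).prod (μ b)) :=
    hF.integral_prod_left
  rw [← map_pi_eval_prodMk_prodMk μ hab hac hbc] at hF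
  calc ∫ x, F (x a) (x b) (x c) ∂Measure.pi μ
      = ∫ p, F p.1.1 p.1.2 p.2 ∂(Measure.pi μ).map (fun x => ((x a, x b), x c)) :=
        (integral_map (by fun_prop) hF.aestronglyMeasurable).symm
    _ = ∫ p : E a × E b, ∫ u, F p.1 p.2 u ∂μ c ∂(μ a).prod (μ b) := by
        rw [map_pi_eval_prodMk_prodMk μ hab hac hbc] at hF ⊢
        exact integral_prod _ hF
    _ = ∫ s, ∫ t, ∫ u, F s t u ∂μ c ∂μ b ∂μ a := integral_prod _ hF₂

end ProductCoordinates

theorem integral_bern {p : ℝ} (hp0 : 0 ≤ p) (hp1 : p ≤ 1) (g : Bool → ℝ) :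
    ∫ b, g b ∂bern p = p * g true + (1 - p) * g false := by
  have hg (b : Bool) (c : ℝ≥0∞) (hc : c ≠ ∞) : Integrable g (c • Measure.dirac b) :=
    (integrable_dirac enorm_lt_top).smul_measure hc
  rw [bern, integral_add_measure (hg _ _ ENNReal.ofReal_ne_top) (hg _ _ ENNReal.ofReal_ne_top),
    integral_smul_measure,
    integral_smul_measure, integral_dirac, integral_dirac, ENNReal.toReal_ofReal hp0,
    ENNReal.toReal_ofReal (sub_nonneg.2 hp1), smul_eq_mul, smul_eq_mul]

theorem isProbabilityMeasure_bern {p : ℝ} (hp0 : 0 ≤ p) (hp1 : p ≤ 1) :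
    IsProbabilityMeasure (bern p) := by
  constructor
  simp [bern, ← ENNReal.ofReal_add hp0 (sub_nonneg.2 hp1)]

noncomputable abbrev zeroOneLoss (t : ℝ) : ℝ := if t ≤ 0 then 1 else 0

theorem zeroOneLoss_nonneg (t : ℝ) : 0 ≤ zeroOneLoss t := by
  unfold zeroOneLoss
  split_ifs <;> norm_num

section JointMeasure

variable {𝒳 : Type*} [MeasurableSpace 𝒳] [Countable 𝒳] [DiscreteMeasurableSpace 𝒳]
  (PX : Measure 𝒳) {η : 𝒳 → ℝ}

theorem phiRisk_jointMeasure (hη0 : ∀ x, 0 ≤ η x) (hη1 : ∀ x, η x ≤ 1) {φ : ℝ → ℝ}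
    (hφ : ∀ t, 0 ≤ φ t) (f : 𝒳 → ℝ) :
    phiRisk (jointMeasure PX η) φ f = ∫ x, (η x * φ (f x) + (1 - η x) * φ (-f x)) ∂PX := by
  have hcond : ∀ x, 0 ≤ η x * φ (f x) + (1 - η x) * φ (-f x) := fun x =>
    add_nonneg (mul_nonneg (hη0 x) (hφ _)) (mul_nonneg (sub_nonneg.2 (hη1 x)) (hφ _))
  rw [phiRisk, integral_eq_lintegral_of_nonneg_ae (ae_of_all _ fun _ => hφ _)
      Measurable.of_discrete.aestronglyMeasurable,
    integral_eq_lintegral_of_nonneg_ae (ae_of_all _ hcond)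
      Measurable.of_discrete.aestronglyMeasurable, jointMeasure,
    Measure.lintegral_bind Measurable.of_discrete.aemeasurable
      Measurable.of_discrete.aemeasurable]
  congr 1
  refine lintegral_congr fun x => ?_
  rw [ENNReal.ofReal_add (mul_nonneg (hη0 x) (hφ _)) (mul_nonneg (sub_nonneg.2 (hη1 x)) (hφ _)),
    ENNReal.ofReal_mul (hη0 x), ENNReal.ofReal_mul (sub_nonneg.2 (hη1 x))]
  simp [lintegral_add_measure, lintegral_smul_measure, ytoR]

theorem one_sub_le_zeroOneLoss_conditionalRisk {q : ℝ} (hq : 1 / 2 ≤ q) (t : ℝ) :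
    1 - q ≤ q * zeroOneLoss t + (1 - q) * zeroOneLoss (-t) := by
  unfold zeroOneLoss
  split_ifs <;> linarith

theorem phiRisk_zeroOneLoss_one_le [IsFiniteMeasure PX] (hη : ∀ x, 1 / 2 ≤ η x)
    (hη1 : ∀ x, η x ≤ 1) (f : 𝒳 → ℝ) :
    phiRisk (jointMeasure PX η) zeroOneLoss (fun _ => 1) ≤
      phiRisk (jointMeasure PX η) zeroOneLoss f := by
  have hη0 : ∀ x, 0 ≤ η x := fun x => by linarith [hη x]
  rw [phiRisk_jointMeasure PX hη0 hη1 zeroOneLoss_nonneg,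
    phiRisk_jointMeasure PX hη0 hη1 zeroOneLoss_nonneg]
  refine integral_mono_of_nonneg (ae_of_all _ fun x => ?_) ?_ (ae_of_all _ fun x => ?_)
  · norm_num [zeroOneLoss, hη1 x]
  · refine Integrable.of_bound Measurable.of_discrete.aestronglyMeasurable 1
      (ae_of_all _ fun x => ?_)
    have := hη0 x
    have := hη1 x
    rw [Real.norm_eq_abs, abs_le]
    unfold zeroOneLoss
    constructor <;> split_ifs <;> nlinarith
  · have hone : η x * zeroOneLoss 1 + (1 - η x) * zeroOneLoss (-1) = 1 - η x := by
      norm_num [zeroOneLoss]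
    exact hone.trans_le (one_sub_le_zeroOneLoss_conditionalRisk (hη x) (f x))

theorem phiRisk_zeroOneLoss_one_eq_phiRiskStar [IsFiniteMeasure PX] (hη : ∀ x, 1 / 2 ≤ η x)
    (hη1 : ∀ x, η x ≤ 1) :
    phiRisk (jointMeasure PX η) zeroOneLoss (fun _ => 1) =
      phiRiskStar (jointMeasure PX η) zeroOneLoss := by
  have hleast : IsLeast {r | ∃ f : 𝒳 → ℝ, Measurable f ∧
      r = phiRisk (jointMeasure PX η) zeroOneLoss f}
      (phiRisk (jointMeasure PX η) zeroOneLoss fun _ => 1) := by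
    refine ⟨⟨fun _ => 1, measurable_const, rfl⟩, ?_⟩
    rintro _ ⟨f, -, rfl⟩
    exact phiRisk_zeroOneLoss_one_le PX hη hη1 f
  exact hleast.csInf_eq.symm

end JointMeasure

section Cube

variable {M : ℕ} {h w : ℝ}

theorem cubeEta_nonneg (hh0 : 0 ≤ h) (j : Fin M) (x : Fin (M + 1) → Bool) :
    0 ≤ cubeEta M h j x := by
  unfold cubeEta
  split_ifs <;> linarith

theorem half_lt_cubeEta (hh0 : 0 < h) (j : Fin M) (x : Fin (M + 1) → Bool) :
    1 / 2 < cubeEta M h j x := by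
  unfold cubeEta
  split_ifs <;> linarith

theorem cubeEta_le_one (hh : h ≤ 1 / 2) (j : Fin M) (x : Fin (M + 1) → Bool) :
    cubeEta M h j x ≤ 1 := by
  unfold cubeEta
  split_ifs <;> linarith

variable (hw0 : 0 ≤ w) (hw1 : w ≤ 1)
include hw0 hw1

theorem isProbabilityMeasure_cubePX_coord (i : Fin (M + 1)) :
    IsProbabilityMeasure (if i = 0 then bern w else bern (1 / 2)) := by
  split_ifs
  · exact isProbabilityMeasure_bern hw0 hw1
  · exact isProbabilityMeasure_bern (by norm_num) (by norm_num)

theorem isProbabilityMeasure_cubePX : IsProbabilityMeasure (cubePX M w) := by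
  have := isProbabilityMeasure_cubePX_coord hw0 hw1 (M := M)
  unfold cubePX
  infer_instance

theorem integral_cubePX_comp_eval₂ (j : Fin M) (F : Bool → Bool → ℝ) :
    ∫ x, F (x 0) (x j.succ) ∂cubePX M w = ∫ s, ∫ t, F s t ∂bern (1 / 2) ∂bern w := by
  have := isProbabilityMeasure_cubePX_coord hw0 hw1 (M := M)
  simpa [cubePX, Fin.succ_ne_zero] using
    integral_pi_comp_eval₂ (E := fun _ => Bool) (fun i => if i = 0 then bern w else bern (1 / 2))
      (Fin.succ_ne_zero j).symm F Integrable.of_finite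

theorem integral_cubePX_comp_eval₃ {j k : Fin M} (hjk : j ≠ k) (F : Bool → Bool → Bool → ℝ) :
    ∫ x, F (x 0) (x j.succ) (x k.succ) ∂cubePX M w =
      ∫ s, ∫ t, ∫ u, F s t u ∂bern (1 / 2) ∂bern (1 / 2) ∂bern w := by
  have := isProbabilityMeasure_cubePX_coord hw0 hw1 (M := M)
  simpa [cubePX, Fin.succ_ne_zero] using
    integral_pi_comp_eval₃ (E := fun _ => Bool) (fun i => if i = 0 then bern w else bern (1 / 2))
      (Fin.succ_ne_zero j).symm (Fin.succ_ne_zero k).symm (Fin.succ_injective M |>.ne hjk) F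
      Integrable.of_finite

variable (hh0 : 0 ≤ h) (hh : h ≤ 1 / 2)
include hh0 hh

theorem phiRisk_cubeF_self (j : Fin M) :
    phiRisk (jointMeasure (cubePX M w) (cubeEta M h j)) zeroOneLoss (cubeF M j) =
      w / 2 + (1 - w) * (1 / 2 - h / 4) := by
  rw [phiRisk_jointMeasure _ (cubeEta_nonneg hh0 j) (cubeEta_le_one hh j) zeroOneLoss_nonneg]
  -- the conditional risk, with `cubeEta` and `cubeF` unfolded into coordinates
  refine (integral_cubePX_comp_eval₂ hw0 hw1 j fun a b =>
    (if a then 1 else if b then 1 / 2 + h else 1 / 2 + h / 2) * zeroOneLoss (if b then 1 else -1) +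
      (1 - if a then 1 else if b then 1 / 2 + h else 1 / 2 + h / 2) *
        zeroOneLoss (-if b then 1 else -1)).trans ?_
  simp only [integral_bern hw0 hw1, integral_bern (p := 1 / 2) (by norm_num) (by norm_num)]
  norm_num [zeroOneLoss]
  ring

theorem phiRisk_cubeF_of_ne {j k : Fin M} (hkj : k ≠ j) :
    phiRisk (jointMeasure (cubePX M w) (cubeEta M h j)) zeroOneLoss (cubeF M k) = 1 / 2 := by
  rw [phiRisk_jointMeasure _ (cubeEta_nonneg hh0 j) (cubeEta_le_one hh j) zeroOneLoss_nonneg]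
  refine (integral_cubePX_comp_eval₃ hw0 hw1 hkj.symm fun a b c =>
    (if a then 1 else if b then 1 / 2 + h else 1 / 2 + h / 2) * zeroOneLoss (if c then 1 else -1) +
      (1 - if a then 1 else if b then 1 / 2 + h else 1 / 2 + h / 2) *
        zeroOneLoss (-if c then 1 else -1)).trans ?_
  simp only [integral_bern hw0 hw1, integral_bern (p := 1 / 2) (by norm_num) (by norm_num)]
  norm_num [zeroOneLoss]
  ring

end Cube

theorem cube_zero_one_risks_general (M : ℕ) (h w : ℝ)
    (hh0 : 0 < h) (hh : h ≤ 1 / 2) (hw0 : 0 ≤ w) (hw1 : w ≤ 1) (j : Fin M) :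
    (∀ x, 1 / 2 < cubeEta M h j x) ∧
    (phiRisk (jointMeasure (cubePX M w) (cubeEta M h j)) (fun x => if x ≤ 0 then 1 else 0)
        (fun _ => 1) =
      phiRiskStar (jointMeasure (cubePX M w) (cubeEta M h j))
        (fun x => if x ≤ 0 then 1 else 0)) ∧
    (∀ k : Fin M,
      phiRisk (jointMeasure (cubePX M w) (cubeEta M h j)) (fun x => if x ≤ 0 then 1 else 0)
          (cubeF M j) ≤
        phiRisk (jointMeasure (cubePX M w) (cubeEta M h j)) (fun x => if x ≤ 0 then 1 else 0)
          (cubeF M k)) ∧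
    (∀ k : Fin M, k ≠ j →
      phiRisk (jointMeasure (cubePX M w) (cubeEta M h j)) (fun x => if x ≤ 0 then 1 else 0)
          (cubeF M k) -
        phiRisk (jointMeasure (cubePX M w) (cubeEta M h j)) (fun x => if x ≤ 0 then 1 else 0)
          (cubeF M j) = (1 - w) * h / 4) := by
  have := isProbabilityMeasure_cubePX hw0 hw1 (M := M)
  refine ⟨half_lt_cubeEta hh0 j, ?_, fun k => ?_, fun k hkj => ?_⟩
  · exact phiRisk_zeroOneLoss_one_eq_phiRiskStar _ (fun x => (half_lt_cubeEta hh0 j x).le)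
      (cubeEta_le_one hh j)
  · rcases eq_or_ne k j with rfl | hkj
    · exact le_rfl
    rw [phiRisk_cubeF_of_ne hw0 hw1 hh0.le hh hkj, phiRisk_cubeF_self hw0 hw1 hh0.le hh]
    linarith [mul_nonneg (sub_nonneg.2 hw1) hh0.le]
  · rw [phiRisk_cubeF_of_ne hw0 hw1 hh0.le hh hkj, phiRisk_cubeF_self hw0 hw1 hh0.le hh]
    ring

/-- in the cube construction with `0 < h ≤ 1/2` and `0 ≤ w ≤ 1`, under `π_j`:
the Bayes classifier is `f* ≡ 1` (indeed `η^{(j)} > 1/2` everywhere and the constant classifier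
`1` attains the minimal 0–1 risk); `f_j` minimizes the 0–1 risk over `F = {f₁, …, f_M}`; and
`A^{φ₀}(f_k) − A^{φ₀}(f_j) = (1−w)h/4` for every `k ≠ j`. -/
theorem cube_zero_one_risks (M : ℕ) (hM : 2 ≤ M) (h w : ℝ)
    (hh0 : 0 < h) (hh : h ≤ 1 / 2) (hw0 : 0 ≤ w) (hw1 : w ≤ 1) (j : Fin M) :
    (∀ x, 1 / 2 < cubeEta M h j x) ∧
    (phiRisk (jointMeasure (cubePX M w) (cubeEta M h j)) (fun x => if x ≤ 0 then 1 else 0)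
        (fun _ => 1) =
      phiRiskStar (jointMeasure (cubePX M w) (cubeEta M h j))
        (fun x => if x ≤ 0 then 1 else 0)) ∧
    (∀ k : Fin M,
      phiRisk (jointMeasure (cubePX M w) (cubeEta M h j)) (fun x => if x ≤ 0 then 1 else 0)
          (cubeF M j) ≤
        phiRisk (jointMeasure (cubePX M w) (cubeEta M h j)) (fun x => if x ≤ 0 then 1 else 0)
          (cubeF M k)) ∧
    (∀ k : Fin M, k ≠ j →
      phiRisk (jointMeasure (cubePX M w) (cubeEta M h j)) (fun x => if x ≤ 0 then 1 else 0)
          (cubeF M k) -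
        phiRisk (jointMeasure (cubePX M w) (cubeEta M h j)) (fun x => if x ≤ 0 then 1 else 0)
          (cubeF M j) = (1 - w) * h / 4) :=
  cube_zero_one_risks_general M h w hh0 hh hw0 hw1 j
end
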